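/- arXiv:2308.13489 — 7 statements merged into one kernel-verified Lean document; each statement's English description precedes it below -/
import Mathlib

section
/- Suppose B₁ ⊆ 𝔽_q^{m₁} is C₁-weakly Sidorenko and B₂ ⊆ 𝔽_q^{m₂} is C₂-weakly Sidorenko. Then B₁ × B₂ ⊆ 𝔽_q^{m₁+m₂} is C₁C₂-weakly Sidorenko. -/
open Pointwise

noncomputable def omegaLin (F : Type*) [Field F] {V : Type*} [AddCommGroup V] [Module F V]
    (A : Set V) : ℕ :=
  sSup {d : ℕ | ∃ W : Submodule F V, Module.finrank F W = d ∧ (W : Set V) ⊆ A ∪ {0}}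

noncomputable def omegaAff (F : Type*) [Field F] {V : Type*} [AddCommGroup V] [Module F V]
    (A : Set V) : ℕ :=
  sSup {d : ℕ | ∃ (x : V) (W : Submodule F V), Module.finrank F W = d ∧
    (fun w => x + w) '' (W : Set V) ⊆ A}

def dirSet (F : Type*) [Field F] {V : Type*} [AddCommGroup V] [Module F V] (A : Set V) : Set V :=
  {d | ∃ x, ∀ c : F, x + c • d ∈ A}

noncomputable def affRank (F : Type*) [Field F] {V : Type*} [AddCommGroup V] [Module F V]
    (B : Set V) : ℕ :=
  Module.finrank F (affineSpan F B).direction + 1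

def affHomSet (F : Type*) [Field F] {V W : Type*} [AddCommGroup V] [Module F V]
    [AddCommGroup W] [Module F W] (B : Set V) (A : Set W) : Set (B → W) :=
  {f | (∃ φ : V →ᵃ[F] W, ∀ x : B, f x = φ x.1) ∧ ∀ x, f x ∈ A}

def IsNondegen (F : Type*) [Field F] {V W : Type*} [AddCommGroup V] [Module F V]
    [AddCommGroup W] [Module F W] (B : Set V) (f : B → W) : Prop :=
  affRank F (Set.range f) = affRank F B

def WeaklySidorenko (F : Type*) [Field F] [Fintype F] {V : Type*} [AddCommGroup V] [Module F V]
    (B : Set V) (C : ℝ) : Prop :=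
  ∀ (n : ℕ) (A : Set (Fin n → F)) (α : ℝ),
    (A.ncard : ℝ) = α * (Fintype.card F : ℝ) ^ n →
    α ^ C * ((Fintype.card F : ℝ) ^ n) ^ (affRank F B) ≤ ((affHomSet F B A).ncard : ℝ)

noncomputable def exAff (F : Type*) [Field F] [Fintype F] {V : Type*} [AddCommGroup V]
    [Module F V] (n : ℕ) (B : Set V) : ℕ :=
  sSup {k : ℕ | ∃ A : Set (Fin n → F), A.ncard = k ∧
    ∀ f ∈ affHomSet F B A, ¬ IsNondegen F B f}

/-!
Fix base points `b₁ ∈ B₁`, `b₂ ∈ B₂`. An affine map on `B₁ × B₂` splits uniquely as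
`(x, y) ↦ f x + ψ y` with `ψ` affine on `B₂` and `ψ b₂ = 0`; it lands in `A` exactly when `f`
lands in `A_ψ = {z | ∀ y, z + ψ y ∈ A}`. The same splitting of affine maps `B₂ → A` into
`z + ψ` shows that the `N ^ dim(span (B₂ - b₂))` sets `A_ψ` have average density at least
`α ^ C₂`. Applying the `C₁`-bound to each `A_ψ` and Jensen's inequality for `t ↦ t ^ C₁`
(testing `A = {0}` shows `C₁ ≥ affRank B₁ ≥ 1`) gives the `C₁ C₂`-bound, since the affine rank
of `B₁ × B₂` is `affRank B₁ + dim(span (B₂ - b₂))`.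
-/

open Module Finset

section AffineOn

variable (F : Type*) {V V' V₁ V₂ W ι : Type*} [Field F] [AddCommGroup V] [Module F V]
  [AddCommGroup V'] [Module F V']
  [AddCommGroup V₁] [Module F V₁] [AddCommGroup V₂] [Module F V₂] [AddCommGroup W] [Module F W]

def IsAffineOn (B : Set V) (f : B → W) : Prop :=
  ∃ φ : V →ᵃ[F] W, ∀ x : B, f x = φ x

variable (W) in
def affHomVanishing {B : Set V} (b : B) : Set (B → W) :=
  {ψ | IsAffineOn F B ψ ∧ ψ b = 0}

variable {F}

def shiftInter (A : Set W) (ψ : ι → W) : Set W :=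
  {z | ∀ i, z + ψ i ∈ A}

theorem isAffineOn_const (B : Set V) (w : W) : IsAffineOn F B fun _ => w :=
  ⟨AffineMap.const F V w, fun _ => rfl⟩

theorem IsAffineOn.add {B : Set V} {f g : B → W} (hf : IsAffineOn F B f)
    (hg : IsAffineOn F B g) : IsAffineOn F B (f + g) := by
  obtain ⟨φ, hφ⟩ := hf
  obtain ⟨χ, hχ⟩ := hg
  exact ⟨φ + χ, fun x => by simp [hφ, hχ]⟩

theorem IsAffineOn.sub {B : Set V} {f g : B → W} (hf : IsAffineOn F B f)
    (hg : IsAffineOn F B g) : IsAffineOn F B (f - g) := by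
  obtain ⟨φ, hφ⟩ := hf
  obtain ⟨χ, hχ⟩ := hg
  exact ⟨φ - χ, fun x => by simp [hφ, hχ]⟩

theorem IsAffineOn.comp {B : Set V} {B' : Set V'} {f : B → W} (hf : IsAffineOn F B f)
    (g : V' →ᵃ[F] V) (hg : ∀ x ∈ B', g x ∈ B) :
    IsAffineOn F B' fun x => f ⟨g x, hg x x.2⟩ := by
  obtain ⟨φ, hφ⟩ := hf
  exact ⟨φ.comp g, fun x => hφ _⟩

theorem AffineMap.apply_prod_add_apply_prod (φ : V₁ × V₂ →ᵃ[F] W) (x x' : V₁) (y y' : V₂) :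
    φ (x, y) + φ (x', y') = φ (x, y') + φ (x', y) := by
  have hsplit : ∀ a b, φ.linear (a, b) = φ.linear (a, 0) + φ.linear (0, b) := fun a b => by
    rw [← map_add, Prod.mk_add_mk, add_zero, zero_add]
  rw [φ.decomp]
  simp only [Pi.add_apply]
  rw [hsplit x y, hsplit x' y', hsplit x y', hsplit x' y]
  abel

theorem IsAffineOn.apply_prod_eq {B₁ : Set V₁} {B₂ : Set V₂} {h : B₁ ×ˢ B₂ → W}
    (hh : IsAffineOn F (B₁ ×ˢ B₂) h) (x b₁ : B₁) (y b₂ : B₂) :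
    h ⟨(x, y), x.2, y.2⟩ =
      h ⟨(x, b₂), x.2, b₂.2⟩ + (h ⟨(b₁, y), b₁.2, y.2⟩ - h ⟨(b₁, b₂), b₁.2, b₂.2⟩) := by
  obtain ⟨φ, hφ⟩ := hh
  simp only [hφ]
  rw [← add_sub_assoc, eq_sub_iff_add_eq, φ.apply_prod_add_apply_prod]

end AffineOn

section Counting

variable {F V W : Type*} [Field F] [AddCommGroup V] [Module F V] [AddCommGroup W] [Module F W]

theorem Module.natCard_linearMap [FiniteDimensional F V] :
    Nat.card (V →ₗ[F] W) = Nat.card W ^ finrank F V := by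
  rw [← Nat.card_congr ((finBasis F V).constr F).toEquiv, Nat.card_fun, Nat.card_fin]

theorem natCard_affHomVanishing [FiniteDimensional F V] {B : Set V} (b : B) :
    Nat.card (affHomVanishing F W b) = Nat.card W ^ finrank F (vectorSpan F B) := by
  set s := (· -ᵥ (b : V)) '' B
  have mem : ∀ y : B, (y : V) - b ∈ Submodule.span F s := fun y =>
    Submodule.subset_span ⟨y, y.2, rfl⟩
  have hvanish : ∀ L : Submodule.span F s →ₗ[F] W,
      (fun y : B => L ⟨y - b, mem y⟩) ∈ affHomVanishing F W b := by
    intro L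
    obtain ⟨g, hg⟩ := L.exists_extend
    refine ⟨⟨g.toAffineMap - AffineMap.const F V (g b), fun y => ?_⟩, ?_⟩
    · simp [← hg]
    · exact (congrArg L (Subtype.ext (sub_self _))).trans (map_zero L)
  let e (L : Submodule.span F s →ₗ[F] W) : affHomVanishing F W b := ⟨_, hvanish L⟩
  have he : Function.Bijective e := by
    refine ⟨fun L L' hLL' => ?_, fun ψ => ?_⟩
    · refine LinearMap.ext_on Submodule.span_span_coe_preimage ?_
      rintro ⟨_, hv⟩ ⟨y, hy, rfl⟩
      exact congrFun (congrArg Subtype.val hLL') ⟨y, hy⟩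
    · obtain ⟨ψ, ⟨φ, hφ⟩, hψb⟩ := ψ
      refine ⟨φ.linear.domRestrict _, Subtype.ext (funext fun y => ?_)⟩
      have hφb : φ b = 0 := (hφ b).symm.trans hψb
      change φ.linear ((y : V) -ᵥ b) = ψ y
      rw [φ.linearMap_vsub, hφb, hφ, vsub_eq_sub, sub_zero]
  rw [vectorSpan_eq_span_vsub_set_right F b.2, ← Nat.card_congr (Equiv.ofBijective e he),
    Module.natCard_linearMap]

theorem card_affHomVanishing_fin [Fintype F] [FiniteDimensional F V] {B : Set V} (b : B) {n : ℕ}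
    [Fintype (affHomVanishing F (Fin n → F) b)] :
    (Fintype.card (affHomVanishing F (Fin n → F) b) : ℝ) =
      ((Fintype.card F : ℝ) ^ n) ^ finrank F (vectorSpan F B) := by
  rw [← Nat.card_eq_fintype_card, natCard_affHomVanishing, Nat.card_fun, Nat.card_fin,
    Nat.card_eq_fintype_card]
  push_cast
  rfl

end Counting

section Decomposition

variable (F : Type*) {V V₁ V₂ W : Type*} [Field F] [AddCommGroup V] [Module F V]
  [AddCommGroup V₁] [Module F V₁] [AddCommGroup V₂] [Module F V₂] [AddCommGroup W] [Module F W]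

def affHomSetEquivSigma {B : Set V} (b : B) (A : Set W) :
    affHomSet F B A ≃ Σ ψ : affHomVanishing F W b, shiftInter A ψ.1 where
  toFun g :=
    ⟨⟨g.1 - fun _ => g.1 b, IsAffineOn.sub g.2.1 (isAffineOn_const B _), sub_self _⟩, g.1 b,
      fun y => by simpa using g.2.2 y⟩
  invFun p := ⟨(fun _ => p.2.1) + p.1.1, (isAffineOn_const B _).add p.1.2.1, p.2.2⟩
  left_inv g := by ext; simp
  right_inv p := Sigma.subtype_ext (Subtype.ext (by ext; simp [p.1.2.2])) (by simp [p.1.2.2])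

def affHomSetProdEquivSigma {B₁ : Set V₁} {B₂ : Set V₂} (b₁ : B₁) (b₂ : B₂) (A : Set W) :
    affHomSet F (B₁ ×ˢ B₂) A ≃
      Σ ψ : affHomVanishing F W b₂, affHomSet F B₁ (shiftInter A ψ.1) where
  toFun h :=
    ⟨⟨fun y => h.1 ⟨(b₁, y), b₁.2, y.2⟩ - h.1 ⟨(b₁, b₂), b₁.2, b₂.2⟩,
        IsAffineOn.sub
          (IsAffineOn.comp h.2.1 ((AffineMap.const F V₂ (b₁ : V₁)).prod (AffineMap.id F V₂))
            fun _ hy => ⟨b₁.2, hy⟩)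
          (isAffineOn_const B₂ _), sub_self _⟩,
      fun x => h.1 ⟨(x, b₂), x.2, b₂.2⟩,
      IsAffineOn.comp h.2.1 ((AffineMap.id F V₁).prod (AffineMap.const F V₁ (b₂ : V₂)))
        fun _ hx => ⟨hx, b₂.2⟩,
      fun x y => by
        rw [← IsAffineOn.apply_prod_eq h.2.1 x b₁ y b₂]
        exact h.2.2 _⟩
  invFun p :=
    ⟨fun z => p.2.1 ⟨z.1.1, z.2.1⟩ + p.1.1 ⟨z.1.2, z.2.2⟩,
      IsAffineOn.add
        (IsAffineOn.comp p.2.2.1 (AffineMap.fst : V₁ × V₂ →ᵃ[F] V₁) fun _ hz => hz.1)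
        (IsAffineOn.comp p.1.2.1 (AffineMap.snd : V₁ × V₂ →ᵃ[F] V₂) fun _ hz => hz.2),
      fun z => p.2.2.2 _ _⟩
  left_inv h := by
    ext z
    exact (IsAffineOn.apply_prod_eq h.2.1 ⟨z.1.1, z.2.1⟩ b₁ ⟨z.1.2, z.2.2⟩ b₂).symm
  right_inv p := Sigma.subtype_ext (Subtype.ext (by ext; simp [p.1.2.2])) (by simp [p.1.2.2])

variable {F}

theorem ncard_affHomSet_eq_sum {B : Set V} (b : B) (A : Set W) [Finite W]
    [Fintype (affHomVanishing F W b)] :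
    (affHomSet F B A).ncard = ∑ ψ : affHomVanishing F W b, (shiftInter A ψ.1).ncard := by
  simp only [← Nat.card_coe_set_eq]
  rw [Nat.card_congr (affHomSetEquivSigma F b A), Nat.card_sigma]

theorem ncard_affHomSet_prod_eq_sum {B₁ : Set V₁} {B₂ : Set V₂} (b₁ : B₁) (b₂ : B₂)
    (A : Set W) [Finite B₁] [Finite W] [Fintype (affHomVanishing F W b₂)] :
    (affHomSet F (B₁ ×ˢ B₂) A).ncard =
      ∑ ψ : affHomVanishing F W b₂, (affHomSet F B₁ (shiftInter A ψ.1)).ncard := by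
  simp only [← Nat.card_coe_set_eq]
  rw [Nat.card_congr (affHomSetProdEquivSigma F b₁ b₂ A), Nat.card_sigma]

end Decomposition

theorem Submodule.finrank_prod {R M M' : Type*} [Ring R] [StrongRankCondition R]
    [AddCommGroup M] [Module R M] [AddCommGroup M'] [Module R M'] (p : Submodule R M)
    (q : Submodule R M') [Module.Free R p] [Module.Free R q] [Module.Finite R p]
    [Module.Finite R q] :
    finrank R (p.prod q) = finrank R p + finrank R q := by
  let e : p.prod q ≃ₗ[R] p × q :=
    { toFun x := (⟨x.1.1, x.2.1⟩, ⟨x.1.2, x.2.2⟩)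
      invFun x := ⟨(x.1, x.2), x.1.2, x.2.2⟩
      map_add' _ _ := rfl
      map_smul' _ _ := rfl }
  rw [e.finrank_eq, Module.finrank_prod]

theorem affRank_prod {F V₁ V₂ : Type*} [Field F] [AddCommGroup V₁] [Module F V₁]
    [AddCommGroup V₂] [Module F V₂] [FiniteDimensional F V₁] [FiniteDimensional F V₂]
    {B₁ : Set V₁} {B₂ : Set V₂} (h₁ : B₁.Nonempty) (h₂ : B₂.Nonempty) :
    affRank F (B₁ ×ˢ B₂) = affRank F B₁ + finrank F (vectorSpan F B₂) := by
  rw [affRank, affRank, direction_affineSpan, direction_affineSpan, vectorSpan_prod_eq h₁ h₂,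
    Submodule.finrank_prod]
  omega

theorem Finset.card_mul_rpow_mean_le_sum_rpow {ι : Type*} (s : Finset ι) {f : ι → ℝ}
    (hf : ∀ i ∈ s, 0 ≤ f i) {p : ℝ} (hp : 1 ≤ p) :
    #s * ((∑ i ∈ s, f i) / #s) ^ p ≤ ∑ i ∈ s, f i ^ p := by
  rcases s.eq_empty_or_nonempty with rfl | hs
  · simp
  have hcard : (0 : ℝ) < #s := by exact_mod_cast hs.card_pos
  have jensen := Real.rpow_arith_mean_le_arith_mean_rpow s (fun _ => (#s : ℝ)⁻¹) f
    (fun _ _ => by positivity) (by simp [hcard.ne']) hf hp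
  rw [← Finset.mul_sum, ← Finset.mul_sum, inv_mul_eq_div] at jensen
  rwa [le_inv_mul_iff₀ hcard] at jensen

namespace WeaklySidorenko

variable {F V V₁ V₂ : Type*} [Field F] [Fintype F] [AddCommGroup V] [Module F V]
  [AddCommGroup V₁] [Module F V₁] [AddCommGroup V₂] [Module F V₂]

theorem rpow_mul_le_one {B : Set V} {C : ℝ} (h : WeaklySidorenko F B C) {n : ℕ}
    {A : Set (Fin n → F)} (hA : (affHomSet F B A).Subsingleton) :
    ((A.ncard : ℝ) / Fintype.card F ^ n) ^ C * ((Fintype.card F : ℝ) ^ n) ^ affRank F B ≤ 1 :=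
  (h n A _ (by field_simp)).trans (by exact_mod_cast (Set.ncard_le_one hA.finite).2 hA)

theorem nonempty {B : Set V} {C : ℝ} (h : WeaklySidorenko F B C) : B.Nonempty := by
  by_contra hB
  rw [Set.not_nonempty_iff_eq_empty] at hB
  subst hB
  have hrank : affRank F (∅ : Set V) = 1 := by
    rw [affRank, AffineSubspace.span_empty, AffineSubspace.direction_bot, finrank_bot]
  have := h.rpow_mul_le_one (n := 1) (A := Set.univ) fun f _ g _ => funext fun x => x.2.elim
  simp [hrank, Set.ncard_univ, Nat.card_eq_fintype_card] at this
  exact this.not_gt Fintype.one_lt_card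

theorem affRank_le {B : Set V} {C : ℝ} (h : WeaklySidorenko F B C) : (affRank F B : ℝ) ≤ C := by
  have hq : (1 : ℝ) < Fintype.card F := by exact_mod_cast Fintype.one_lt_card
  have hq₀ : (0 : ℝ) < Fintype.card F := one_pos.trans hq
  have := h.rpow_mul_le_one (n := 1) (A := {0}) fun f hf g hg =>
    funext fun x => (hf.2 x).trans (hg.2 x).symm
  rw [Set.ncard_singleton, Nat.cast_one, pow_one, one_div, Real.inv_rpow hq₀.le,
    ← Real.rpow_neg hq₀.le, ← Real.rpow_natCast, ← Real.rpow_add hq₀,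
    ← Real.rpow_zero (Fintype.card F : ℝ), Real.rpow_le_rpow_left_iff hq] at this
  linarith

theorem prod [Finite V₁] [Finite V₂] {B₁ : Set V₁} {B₂ : Set V₂} {C₁ C₂ : ℝ}
    (h₁ : WeaklySidorenko F B₁ C₁) (h₂ : WeaklySidorenko F B₂ C₂) :
    WeaklySidorenko F (B₁ ×ˢ B₂) (C₁ * C₂) := by
  obtain ⟨b₁, hb₁⟩ := h₁.nonempty
  obtain ⟨b₂, hb₂⟩ := h₂.nonempty
  have hC₁ : 1 ≤ C₁ := le_trans (by exact_mod_cast Nat.le_add_left 1 _) h₁.affRank_le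
  intro n A α hα
  set N : ℝ := (Fintype.card F : ℝ) ^ n
  have hN : 0 < N := by positivity
  have hα₀ : 0 ≤ α := nonneg_of_mul_nonneg_left (hα ▸ Nat.cast_nonneg _) hN
  let Ψ := affHomVanishing F (Fin n → F) (⟨b₂, hb₂⟩ : B₂)
  let _ : Fintype Ψ := Fintype.ofFinite Ψ
  set K : ℝ := (Fintype.card Ψ : ℝ)
  set x : Ψ → ℝ := fun ψ => (shiftInter A ψ.1).ncard / N
  have hK : K = N ^ finrank F (vectorSpan F B₂) := card_affHomVanishing_fin _
  have hmean : α ^ C₂ ≤ (∑ ψ, x ψ) / K := by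
    rw [le_div_iff₀ (hK ▸ by positivity), ← Finset.sum_div, ← Nat.cast_sum,
      ← ncard_affHomSet_eq_sum, le_div_iff₀ hN]
    calc α ^ C₂ * K * N = α ^ C₂ * N ^ affRank F B₂ := by
          rw [hK, affRank, direction_affineSpan]
          ring
      _ ≤ _ := h₂ n A α hα
  calc α ^ (C₁ * C₂) * N ^ affRank F (B₁ ×ˢ B₂)
      = K * (α ^ C₂) ^ C₁ * N ^ affRank F B₁ := by
        rw [affRank_prod ⟨b₁, hb₁⟩ ⟨b₂, hb₂⟩, hK, mul_comm C₁, Real.rpow_mul hα₀]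
        ring
    _ ≤ K * ((∑ ψ, x ψ) / K) ^ C₁ * N ^ affRank F B₁ := by gcongr
    _ ≤ (∑ ψ, x ψ ^ C₁) * N ^ affRank F B₁ := by
        gcongr
        exact Finset.card_mul_rpow_mean_le_sum_rpow _ (fun ψ _ => by positivity) hC₁
    _ ≤ ∑ ψ : Ψ, ((affHomSet F B₁ (shiftInter A ψ.1)).ncard : ℝ) := by
        rw [Finset.sum_mul]
        gcongr with ψ
        exact h₁ n _ _ (div_mul_cancel₀ _ hN.ne').symm
    _ = (affHomSet F (B₁ ×ˢ B₂) A).ncard := by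
        rw [ncard_affHomSet_prod_eq_sum ⟨b₁, hb₁⟩ ⟨b₂, hb₂⟩, Nat.cast_sum]

end WeaklySidorenko

theorem stmt_8 (F : Type*) [Field F] [Fintype F] (m₁ m₂ : ℕ)
    (B₁ : Set (Fin m₁ → F)) (B₂ : Set (Fin m₂ → F)) (C₁ C₂ : ℝ)
    (h₁ : WeaklySidorenko F B₁ C₁) (h₂ : WeaklySidorenko F B₂ C₂) :
    WeaklySidorenko F (B₁ ×ˢ B₂) (C₁ * C₂) :=
  h₁.prod h₂
end

section
/- If an affine configuration B ⊆ 𝔽_q^m is C-weakly Sidorenko with some subset of B of size ≥ 2 (i.e., rank_aff(B) = r ≥ 1), then for every n the affine extremal number satisfies ex_aff(n, B) < q^{n − (n−r+1)/(C−r+1)}. -/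
open Pointwise

theorem my_eqOn_affineSpan {F V W : Type*} [Field F] [AddCommGroup V] [Module F V]
    [AddCommGroup W] [Module F W] {φ ψ : V →ᵃ[F] W} {s : Set V}
    (h : ∀ x ∈ s, φ x = ψ x) {p : V} (hp : p ∈ affineSpan F s) : φ p = ψ p := by
  have hs : s = Set.range (fun x : s => (x : V)) := Subtype.range_coe.symm
  rw [hs] at hp
  obtain ⟨t, w, hw, rfl⟩ := eq_affineCombination_of_mem_affineSpan hp
  rw [Finset.map_affineCombination _ _ _ hw, Finset.map_affineCombination _ _ _ hw]
  have : (⇑φ ∘ fun x : s => (x : V)) = (⇑ψ ∘ fun x : s => (x : V)) := by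
    funext x; exact h x x.2
  rw [this]


theorem my_exists_earlier {F V : Type*} [Field F] [AddCommGroup V] [Module F V]
    {r : ℕ} {v : Fin r → V} (hv : ¬ AffineIndependent F v) :
    ∃ i : Fin r, 0 < i.val ∧ v i ∈ affineSpan F (v '' {j | j.val < i.val}) := by
  by_contra hcon
  push_neg at hcon
  apply hv
  have key : ∀ k : ℕ, k ≤ r →
      AffineIndependent F (fun j : {j : Fin r // j.val < k} => v j) := by
    intro k
    induction k with
    | zero =>
      intro _
      haveI : Subsingleton {j : Fin r // j.val < 0} := ⟨by rintro ⟨a, ha⟩; omega⟩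
      exact affineIndependent_of_subsingleton F _
    | succ k ih =>
      intro hk
      have ihk := ih (Nat.le_of_succ_le hk)
      by_cases hk0 : k = 0
      · subst hk0
        haveI : Subsingleton {j : Fin r // j.val < 1} := ⟨by
          rintro ⟨a, ha⟩ ⟨b, hb⟩
          have : a = b := Fin.ext (by omega)
          simp [this]⟩
        exact affineIndependent_of_subsingleton F _
      · set i : {j : Fin r // j.val < k + 1} := ⟨⟨k, hk⟩, Nat.lt_succ_self k⟩ with hidef
        apply AffineIndependent.affineIndependent_of_notMem_span
          (i := i) (p := fun j : {j : Fin r // j.val < k + 1} => v j)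
        · exact ihk.comp_embedding
            ((⟨fun y => ⟨y.1.1, by
                have h1 : y.1.1.val < k + 1 := y.1.2
                have h2 : y.1.1.val ≠ k := fun h => y.2 (Subtype.ext (Fin.ext h))
                omega⟩,
             fun a b hab => by
               apply Subtype.ext; apply Subtype.ext; apply Fin.ext
               exact congrArg (fun z : {j : Fin r // j.val < k} => z.1.val) hab⟩ :
             {y : {j : Fin r // j.val < k + 1} // y ≠ i} ↪ {j : Fin r // j.val < k}))
        · have hknot := hcon ⟨k, hk⟩ (by simpa using Nat.pos_of_ne_zero hk0)
          intro hmem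
          apply hknot
          refine affineSpan_mono F ?_ (by simpa using hmem)
          rintro x ⟨y, hy, rfl⟩
          refine ⟨y.1, ?_, rfl⟩
          have h1 : y.1.val < k + 1 := y.2
          have h2 : y.1.val ≠ k := by
            intro h
            exact hy (Subtype.ext (Fin.ext h))
          simpa using by omega
  have hr := key r le_rfl
  exact hr.comp_embedding
    ⟨fun j => ⟨j, j.isLt⟩,
     fun a b hab => congrArg (fun z : {j : Fin r // j.val < r} => z.1) hab⟩


theorem my_card_Di {F : Type*} [Field F] [Fintype F] {n r : ℕ} (A : Set (Fin n → F))
    (i : Fin r) (hi : 0 < i.val) :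
    Nat.card {v : Fin r → (Fin n → F) // (∀ j, v j ∈ A) ∧
        v i ∈ affineSpan F (v '' {j | j.val < i.val})} ≤
      A.ncard ^ (r - 1) * Fintype.card F ^ (i.val - 1) := by
  classical
  set S := {v : Fin r → (Fin n → F) // (∀ j, v j ∈ A) ∧
        v i ∈ affineSpan F (v '' {j | j.val < i.val})} with hS
  have hmem : ∀ x : S, x.1 i ∈
      affineSpan F (Set.range (fun j : {j : Fin r // j.val < i.val} => x.1 j.1)) := by
    intro x
    have h := x.2.2
    have himg : x.1 '' {j | j.val < i.val} =
        Set.range (fun j : {j : Fin r // j.val < i.val} => x.1 j.1) := by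
      rw [Set.image_eq_range]
      rfl
    rwa [himg] at h
  have hex : ∀ x : S, ∃ w : {j : Fin r // j.val < i.val} → F, ∑ j, w j = 1 ∧
      x.1 i = Finset.univ.affineCombination F
        (fun j : {j : Fin r // j.val < i.val} => x.1 j.1) w :=
    fun x => eq_affineCombination_of_mem_affineSpan_of_fintype (hmem x)
  choose w hw1 hw2 using hex
  set Φ : S → ({j : Fin r // j ≠ i} → ↥A) × ({j : Fin r // 0 < j.val ∧ j.val < i.val} → F) :=
    fun x => (fun j => ⟨x.1 j.1, x.2.1 j.1⟩, fun j => w x ⟨j.1, j.2.2⟩) with hΦ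
  have hinj : Function.Injective Φ := by
    intro x y hxy
    have h1 : ∀ j : {j : Fin r // j ≠ i}, x.1 j.1 = y.1 j.1 := by
      intro j
      have h := congrFun (congrArg Prod.fst hxy) j
      exact congrArg Subtype.val h
    have hvv : ∀ j : Fin r, j ≠ i → x.1 j = y.1 j := fun j hj => h1 ⟨j, hj⟩
    have hpp : (fun j : {j : Fin r // j.val < i.val} => x.1 j.1) =
        (fun j : {j : Fin r // j.val < i.val} => y.1 j.1) := by
      funext j
      exact hvv j.1 (fun h => absurd (h ▸ j.2) (lt_irrefl _))
    have h2 : ∀ j : {j : Fin r // 0 < j.val ∧ j.val < i.val},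
        w x ⟨j.1, j.2.2⟩ = w y ⟨j.1, j.2.2⟩ := by
      intro j
      exact congrFun (congrArg Prod.snd hxy) j
    have hne : ∀ j : {j : Fin r // j.val < i.val}, j.1.val ≠ 0 → w x j = w y j := by
      intro j hj0
      have := h2 ⟨j.1, Nat.pos_of_ne_zero hj0, j.2⟩
      simpa using this
    have hww : w x = w y := by
      funext j
      by_cases hj : j.1.val = 0
      · have hsx := hw1 x
        have hsy := hw1 y
        rw [← Finset.add_sum_erase _ _ (Finset.mem_univ j)] at hsx hsy
        have herase : ∑ k ∈ Finset.univ.erase j, w x k =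
            ∑ k ∈ Finset.univ.erase j, w y k := by
          refine Finset.sum_congr rfl (fun k hk => ?_)
          refine hne k (fun hk0 => ?_)
          exact Finset.ne_of_mem_erase hk (Subtype.ext (Fin.ext (by rw [hk0, hj])))
        rw [herase] at hsx
        exact add_right_cancel (hsx.trans hsy.symm)
      · exact hne j hj
    have hxy1 : x.1 = y.1 := by
      funext j
      by_cases hj : j = i
      · subst hj
        rw [hw2 x, hw2 y, hpp, hww]
      · exact hvv j hj
    exact Subtype.ext hxy1
  have hcard1 : Nat.card {j : Fin r // j ≠ i} = r - 1 := by
    rw [Nat.card_eq_fintype_card]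
    simp [Fintype.card_subtype_compl]
  have hcard2 : Nat.card {j : Fin r // 0 < j.val ∧ j.val < i.val} ≤ i.val - 1 := by
    rw [Nat.card_eq_fintype_card]
    have hinj2 : Function.Injective
        (fun j : {j : Fin r // 0 < j.val ∧ j.val < i.val} => (⟨j.1.val - 1, by
          have h1 := j.2.2; have h2 := j.2.1; omega⟩ : Fin (i.val - 1))) := by
      intro a b hab
      have h := congrArg Fin.val hab
      simp only at h
      have ha := a.2.1
      have hb := b.2.1
      apply Subtype.ext; apply Fin.ext
      omega
    calc Fintype.card {j : Fin r // 0 < j.val ∧ j.val < i.val}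
        ≤ Fintype.card (Fin (i.val - 1)) := Fintype.card_le_of_injective _ hinj2
      _ = i.val - 1 := Fintype.card_fin _
  calc Nat.card S
      ≤ Nat.card (({j : Fin r // j ≠ i} → ↥A) ×
          ({j : Fin r // 0 < j.val ∧ j.val < i.val} → F)) :=
        Nat.card_le_card_of_injective Φ hinj
    _ = Nat.card ({j : Fin r // j ≠ i} → ↥A) *
          Nat.card ({j : Fin r // 0 < j.val ∧ j.val < i.val} → F) := Nat.card_prod _ _
    _ = A.ncard ^ Nat.card {j : Fin r // j ≠ i} *
          Fintype.card F ^ Nat.card {j : Fin r // 0 < j.val ∧ j.val < i.val} := by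
        rw [Nat.card_fun, Nat.card_fun, Nat.card_coe_set_eq,
          Nat.card_eq_fintype_card (α := F)]
    _ ≤ A.ncard ^ (r - 1) * Fintype.card F ^ (i.val - 1) := by
        rw [hcard1]
        exact Nat.mul_le_mul_left _ (Nat.pow_le_pow_right Fintype.card_pos hcard2)


theorem my_ncard_iUnion_le {α ι : Type*} [Fintype ι] [Finite α] (s : ι → Set α) :
    (⋃ i, s i).ncard ≤ ∑ i, (s i).ncard := by
  classical
  haveI := Fintype.ofFinite α
  have h : (⋃ i, s i) = ↑(Finset.univ.biUnion fun i => (s i).toFinset) := by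
    ext x
    simp [Set.mem_iUnion]
  rw [h, Set.ncard_coe_finset]
  calc (Finset.univ.biUnion fun i => (s i).toFinset).card
      ≤ ∑ i, (s i).toFinset.card := Finset.card_biUnion_le
    _ = ∑ i, (s i).ncard := by
        refine Finset.sum_congr rfl fun i _ => ?_
        rw [Set.ncard_eq_toFinset_card']

theorem my_geom_le {q : ℕ} (hq : 2 ≤ q) (m : ℕ) : ∑ j ∈ Finset.range m, q ^ j ≤ q ^ m - 1 := by
  induction m with
  | zero => simp
  | succ m ih =>
    rw [Finset.sum_range_succ, pow_succ]
    have h1 : 1 ≤ q ^ m := Nat.one_le_pow _ _ (by omega)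
    have h2 : q ^ m * 2 ≤ q ^ m * q := Nat.mul_le_mul_left _ hq
    omega

theorem my_C_ge {F : Type*} [Field F] [Fintype F] {m : ℕ} {B : Set (Fin m → F)}
    {C : ℝ} {r : ℕ} (hB : B.Nonempty) (hr : affRank F B = r)
    (hSid : WeaklySidorenko F B C) : (r : ℝ) ≤ C := by
  classical
  set q : ℕ := Fintype.card F with hq
  have hq2 : 2 ≤ q := Fintype.one_lt_card
  have hq0 : (0:ℝ) < q := by positivity
  have hq1 : (1:ℝ) < q := by exact_mod_cast hq2
  have hhom : affHomSet F B ({0} : Set (Fin 1 → F)) = {fun _ => (0 : Fin 1 → F)} := by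
    ext f
    constructor
    · rintro ⟨-, hA⟩
      have : ∀ x : B, f x = 0 := fun x => hA x
      funext x
      exact this x
    · rintro hf
      have hf' : f = fun _ => (0 : Fin 1 → F) := hf
      subst hf'
      refine ⟨⟨AffineMap.const F (Fin m → F) (0 : Fin 1 → F), fun x => rfl⟩, fun x => rfl⟩
  have hcard1 : ((({0} : Set (Fin 1 → F))).ncard : ℝ) = (q:ℝ)⁻¹ * (q:ℝ) ^ (1:ℕ) := by
    rw [Set.ncard_singleton]
    field_simp
    norm_num
  have := hSid 1 {0} (q:ℝ)⁻¹ hcard1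
  rw [hhom, hr, Set.ncard_singleton] at this
  -- this : (q⁻¹)^C * ((q:ℝ)^1)^r ≤ 1
  have h2 : ((q:ℝ))⁻¹ ^ C * ((q:ℝ) ^ (1:ℕ)) ^ r = (q:ℝ) ^ ((r:ℝ) - C) := by
    rw [Real.inv_rpow (le_of_lt hq0), ← Real.rpow_neg (le_of_lt hq0), pow_one,
      ← Real.rpow_natCast ((q:ℝ)) r, ← Real.rpow_add hq0]
    ring_nf
  rw [h2] at this
  have h3 : (q:ℝ) ^ ((r:ℝ) - C) ≤ (q:ℝ) ^ (0:ℝ) := by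
    rw [Real.rpow_zero]
    exact_mod_cast this
  rw [Real.rpow_le_rpow_left_iff hq1] at h3
  linarith


theorem my_sum_if {q k r : ℕ} (hq : 2 ≤ q) (hr : 1 ≤ r) :
    ∑ i : Fin r, (if 0 < i.val then k ^ (r-1) * q ^ (i.val - 1) else 0) ≤
      k ^ (r-1) * (q ^ (r-1) - 1) := by
  obtain ⟨r', rfl⟩ : ∃ r', r = r' + 1 := ⟨r - 1, by omega⟩
  rw [Fin.sum_univ_succ]
  have h0 : (if 0 < (0 : Fin (r'+1)).val then k ^ (r'+1-1) * q ^ ((0:Fin (r'+1)).val - 1) else 0)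
      = 0 := by simp
  rw [h0, zero_add]
  have hterm : ∀ i : Fin r',
      (if 0 < (i.succ : Fin (r'+1)).val then k ^ (r'+1-1) * q ^ ((i.succ : Fin (r'+1)).val - 1)
        else 0) = k ^ r' * q ^ i.val := by
    intro i
    rw [if_pos (by simp [Fin.val_succ])]
    simp [Fin.val_succ]
  calc ∑ i : Fin r', (if 0 < (i.succ : Fin (r'+1)).val then
          k ^ (r'+1-1) * q ^ ((i.succ : Fin (r'+1)).val - 1) else 0)
      = ∑ i : Fin r', k ^ r' * q ^ i.val := by
        exact Finset.sum_congr rfl fun i _ => hterm i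
    _ = k ^ r' * ∑ j ∈ Finset.range r', q ^ j := by
        rw [← Finset.mul_sum, Fin.sum_univ_eq_sum_range (fun j => q ^ j)]
    _ ≤ k ^ r' * (q ^ r' - 1) := Nat.mul_le_mul_left _ (my_geom_le hq r')
    _ = k ^ (r'+1-1) * (q ^ (r'+1-1) - 1) := by norm_num

theorem stmt_9 (F : Type*) [Field F] [Fintype F] (m : ℕ) (B : Set (Fin m → F))
    (C : ℝ) (r : ℕ) (hB : B.Nonempty) (hr : affRank F B = r) (hr1 : 1 ≤ r)
    (hSid : WeaklySidorenko F B C) (n : ℕ) :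
    (exAff F n B : ℝ) <
      (Fintype.card F : ℝ) ^ ((n : ℝ) - ((n : ℝ) - r + 1) / (C - r + 1)) := by
  classical
  set q : ℕ := Fintype.card F with hqdef
  have hq2 : 2 ≤ q := Fintype.one_lt_card
  have hq0 : (0:ℝ) < (q:ℝ) := by positivity
  have hq1 : (1:ℝ) < (q:ℝ) := by exact_mod_cast hq2
  have hC : (r:ℝ) ≤ C := my_C_ge hB hr hSid
  have hD0 : (0:ℝ) < C - r + 1 := by linarith
  have hRpos : (0:ℝ) < (q:ℝ) ^ ((n:ℝ) - ((n:ℝ) - r + 1)/(C - (r:ℝ) + 1)) :=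
    Real.rpow_pos_of_pos hq0 _
  obtain ⟨b₀, hb₀⟩ := hB
  set K := {k : ℕ | ∃ A : Set (Fin n → F), A.ncard = k ∧
    ∀ f ∈ affHomSet F B A, ¬ IsNondegen F B f} with hK
  have hK0 : 0 ∈ K :=
    ⟨∅, Set.ncard_empty _, fun f hf => absurd (hf.2 ⟨b₀, hb₀⟩) (Set.notMem_empty _)⟩
  have hKbdd : BddAbove K := by
    refine ⟨Fintype.card (Fin n → F), fun k hk => ?_⟩
    obtain ⟨A, hA, -⟩ := hk
    rw [← hA]
    calc A.ncard ≤ (Set.univ : Set (Fin n → F)).ncard :=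
          Set.ncard_le_ncard (Set.subset_univ A) Set.finite_univ
      _ = Fintype.card (Fin n → F) := by rw [Set.ncard_univ, Nat.card_eq_fintype_card]
  have hexK : exAff F n B = sSup K := rfl
  have hmemK : exAff F n B ∈ K := by rw [hexK]; exact Nat.sSup_mem ⟨0, hK0⟩ hKbdd
  obtain ⟨A, hAcard, hAavoid⟩ := hmemK
  set k := exAff F n B with hkdef
  by_cases hk0 : k = 0
  · rw [hk0]
    simpa using hRpos
  have hk1 : 1 ≤ k := Nat.pos_of_ne_zero hk0
  have hkR : (0:ℝ) < (k:ℝ) := by exact_mod_cast hk1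
  -- lower bound from Sidorenko
  have hNpos : (0:ℝ) < (q:ℝ) ^ n := by positivity
  set α : ℝ := (k:ℝ)/((q:ℝ)^n) with hα
  have hα0 : 0 < α := div_pos hkR hNpos
  have hcast : ((A.ncard : ℕ) : ℝ) = α * (q:ℝ)^n := by
    rw [hAcard, hα]
    field_simp
  have hlow := hSid n A α hcast
  rw [hr] at hlow
  -- setup for upper bound
  haveI : Nonempty (Fin r) := ⟨⟨0, hr1⟩⟩
  obtain ⟨s, hsB, hspan, hsind⟩ := exists_affineIndependent F (Fin m → F) B
  have hsne : s.Nonempty := by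
    rcases Set.eq_empty_or_nonempty s with h | h
    · exfalso
      have hb : b₀ ∈ affineSpan F s := by rw [hspan]; exact subset_affineSpan F B hb₀
      rw [h, AffineSubspace.span_empty] at hb
      exact AffineSubspace.notMem_bot F (Fin m → F) b₀ hb
    · exact h
  haveI : Nonempty ↥s := hsne.to_subtype
  haveI : Fintype ↥s := Fintype.ofFinite ↥s
  have hrdef : Module.finrank F (affineSpan F B).direction + 1 = r := by
    have := hr
    simp only [affRank] at this
    omega
  have hcards : Fintype.card ↥s = r := by
    have h1 := hsind.finrank_vectorSpan_add_one
    rw [Subtype.range_coe, ← direction_affineSpan, hspan] at h1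
    rw [← h1, hrdef]
  set e : Fin r ≃ ↥s := (Fintype.equivFinOfCardEq hcards).symm with he
  set T : Set (Fin r → (Fin n → F)) :=
    {v | (∀ j, v j ∈ A) ∧ ¬ AffineIndependent F v} with hT
  set Ψ : (↥B → (Fin n → F)) → (Fin r → (Fin n → F)) :=
    fun f => fun i => f ⟨(e i).1, hsB (e i).2⟩ with hΨ
  have hmaps : ∀ f ∈ affHomSet F B A, Ψ f ∈ T := by
    intro f hf
    obtain ⟨⟨φ, hφ⟩, hfA⟩ := hf
    refine ⟨fun j => hfA _, ?_⟩
    intro hind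
    apply hAavoid f ⟨⟨φ, hφ⟩, hfA⟩
    have hfeq : f = fun x : ↥B => φ x.1 := funext hφ
    have hrangef : Set.range f = φ '' B := by
      rw [hfeq]
      have h' : (fun x : ↥B => φ x.1) = ⇑φ ∘ (Subtype.val : ↥B → _) := rfl
      rw [h', Set.range_comp, Subtype.range_coe]
    have hΨeq : Ψ f = ⇑φ ∘ ((Subtype.val : ↥s → _) ∘ e) := by
      funext i
      exact hφ _
    have hrangeΨ : Set.range (Ψ f) = φ '' s := by
      rw [hΨeq, Set.range_comp, Set.range_comp, e.range_eq_univ, Set.image_univ,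
        Subtype.range_coe]
    have hspan2 : affineSpan F (Set.range f) = affineSpan F (Set.range (Ψ f)) := by
      rw [hrangef, hrangeΨ, ← AffineSubspace.map_span, ← AffineSubspace.map_span, hspan]
    have h2 := hind.finrank_vectorSpan_add_one
    rw [Fintype.card_fin] at h2
    show affRank F (Set.range f) = affRank F B
    simp only [affRank]
    rw [hspan2, direction_affineSpan, h2, ← hr]
    simp only [affRank]
  have hinjΨ : Set.InjOn Ψ (affHomSet F B A) := by
    intro f hf g hg hfg
    obtain ⟨⟨φf, hφf⟩, -⟩ := hf
    obtain ⟨⟨φg, hφg⟩, -⟩ := hg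
    have hps : ∀ p ∈ s, φf p = φg p := by
      intro p hp
      have h := congrFun hfg (e.symm ⟨p, hp⟩)
      simp only [hΨ] at h
      rw [hφf, hφg] at h
      simpa using h
    funext x
    rw [hφf, hφg]
    apply my_eqOn_affineSpan hps
    rw [hspan]
    exact subset_affineSpan F B x.2
  have hH1 : (affHomSet F B A).ncard ≤ T.ncard :=
    Set.ncard_le_ncard_of_injOn Ψ hmaps hinjΨ (Set.toFinite T)
  set E : Fin r → Set (Fin r → (Fin n → F)) := fun i =>
    {v | 0 < i.val ∧ (∀ j, v j ∈ A) ∧ v i ∈ affineSpan F (v '' {j | j.val < i.val})} with hE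
  have hTsub : T ⊆ ⋃ i, E i := by
    rintro v ⟨hvA, hvdep⟩
    obtain ⟨i, hi, hmem⟩ := my_exists_earlier hvdep
    exact Set.mem_iUnion.2 ⟨i, hi, hvA, hmem⟩
  have hTcard : T.ncard ≤ ∑ i : Fin r, (E i).ncard :=
    le_trans (Set.ncard_le_ncard hTsub (Set.toFinite _)) (my_ncard_iUnion_le E)
  have hEcard : ∀ i : Fin r, (E i).ncard ≤
      (if 0 < i.val then k ^ (r-1) * q ^ (i.val - 1) else 0) := by
    intro i
    by_cases hi : 0 < i.val
    · rw [if_pos hi]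
      have hsub : E i ⊆
          {v : Fin r → (Fin n → F) | (∀ j, v j ∈ A) ∧
            v i ∈ affineSpan F (v '' {j | j.val < i.val})} :=
        fun v hv => ⟨hv.2.1, hv.2.2⟩
      refine le_trans (Set.ncard_le_ncard hsub (Set.toFinite _)) ?_
      have h2 := my_card_Di A i hi
      rw [hAcard] at h2
      rw [← Nat.card_coe_set_eq]
      exact h2
    · rw [if_neg hi]
      have hempty : E i = ∅ := by
        ext v
        simp only [hE, Set.mem_setOf_eq, Set.mem_empty_iff_false, iff_false]
        intro hv
        exact hi hv.1
      rw [hempty, Set.ncard_empty]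
  have hchain : (affHomSet F B A).ncard ≤ k ^ (r-1) * (q ^ (r-1) - 1) :=
    le_trans hH1 (le_trans hTcard
      (le_trans (Finset.sum_le_sum fun i _ => hEcard i) (my_sum_if hq2 hr1)))
  -- real arithmetic
  have hq_pow1 : 1 ≤ q ^ (r-1) := Nat.one_le_pow _ _ (by omega)
  have hkpowpos : (0:ℝ) < (k:ℝ) ^ (r-1) := by positivity
  have hHreal : α ^ C * ((q:ℝ)^n)^r < (k:ℝ) ^ (r-1) * (q:ℝ) ^ (r-1) := by
    have h1 : ((affHomSet F B A).ncard : ℝ) ≤ ((k ^ (r-1) * (q ^ (r-1) - 1) : ℕ) : ℝ) := by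
      exact_mod_cast hchain
    have h2 : ((k ^ (r-1) * (q ^ (r-1) - 1) : ℕ) : ℝ) = (k:ℝ)^(r-1) * ((q:ℝ)^(r-1) - 1) := by
      push_cast [Nat.cast_sub hq_pow1]
      ring
    have h3 : (k:ℝ)^(r-1) * ((q:ℝ)^(r-1) - 1) < (k:ℝ)^(r-1) * (q:ℝ)^(r-1) :=
      mul_lt_mul_of_pos_left (by linarith) hkpowpos
    calc α ^ C * ((q:ℝ)^n)^r ≤ ((affHomSet F B A).ncard : ℝ) := hlow
      _ ≤ ((k ^ (r-1) * (q ^ (r-1) - 1) : ℕ) : ℝ) := h1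
      _ = (k:ℝ)^(r-1) * ((q:ℝ)^(r-1) - 1) := h2
      _ < (k:ℝ)^(r-1) * (q:ℝ)^(r-1) := h3
  set D : ℝ := C - r + 1 with hDdef
  have hrcast : ((r - 1 : ℕ) : ℝ) = (r:ℝ) - 1 := by
    push_cast [Nat.cast_sub hr1]
    ring
  -- rewrite everything in rpow form
  have ek : (k:ℝ) = α * (q:ℝ) ^ ((n:ℝ)) := by
    rw [hα, ← Real.rpow_natCast (q:ℝ) n]
    field_simp
  have e1 : α ^ C = α ^ ((r:ℝ) - 1) * α ^ D := by
    rw [← Real.rpow_add hα0, hDdef]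
    ring_nf
  have e2 : ((q:ℝ)^n)^r = (q:ℝ) ^ ((n:ℝ) * r) := by
    rw [← pow_mul, ← Real.rpow_natCast (q:ℝ) (n*r), Nat.cast_mul]
  have e3 : (k:ℝ) ^ (r-1) = α ^ ((r:ℝ)-1) * (q:ℝ) ^ ((n:ℝ) * ((r:ℝ)-1)) := by
    rw [ek, mul_pow, ← Real.rpow_natCast α (r-1), ← Real.rpow_natCast ((q:ℝ) ^ ((n:ℝ))) (r-1),
      hrcast, ← Real.rpow_mul (le_of_lt hq0)]
  have e4 : (q:ℝ) ^ (r-1) = (q:ℝ) ^ ((r:ℝ) - 1) := by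
    rw [← Real.rpow_natCast (q:ℝ) (r-1), hrcast]
  rw [e1, e2, e3, e4] at hHreal
  have hposα : (0:ℝ) < α ^ ((r:ℝ)-1) := Real.rpow_pos_of_pos hα0 _
  have h5 : α ^ D * (q:ℝ) ^ ((n:ℝ) * r) <
      (q:ℝ) ^ ((n:ℝ) * ((r:ℝ)-1)) * (q:ℝ) ^ ((r:ℝ) - 1) := by
    have := hHreal
    rw [mul_assoc, mul_assoc] at this
    exact lt_of_mul_lt_mul_left this (le_of_lt hposα)
  have h6 : α ^ D < (q:ℝ) ^ ((r:ℝ) - 1 - n) := by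
    have hQr : (q:ℝ) ^ ((n:ℝ) * ((r:ℝ)-1)) * (q:ℝ) ^ ((r:ℝ) - 1) =
        (q:ℝ) ^ ((n:ℝ) * ((r:ℝ)-1) + ((r:ℝ) - 1)) := (Real.rpow_add hq0 _ _).symm
    rw [hQr] at h5
    have := (lt_div_iff₀ (Real.rpow_pos_of_pos hq0 ((n:ℝ) * r))).2 h5
    rwa [← Real.rpow_sub hq0, show (n:ℝ) * ((r:ℝ)-1) + ((r:ℝ) - 1) - (n:ℝ) * r =
      (r:ℝ) - 1 - n by ring] at this
  have hαlt : α < (q:ℝ) ^ (((r:ℝ) - 1 - n)/D) := by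
    have h7 : (α ^ D) ^ (1/D) < ((q:ℝ) ^ ((r:ℝ)-1-n)) ^ (1/D) :=
      Real.rpow_lt_rpow (Real.rpow_nonneg (le_of_lt hα0) _) h6 (by positivity)
    rwa [← Real.rpow_mul (le_of_lt hα0), ← Real.rpow_mul (le_of_lt hq0), mul_one_div,
      div_self (ne_of_gt hD0), Real.rpow_one, mul_one_div] at h7
  calc (k:ℝ) = α * (q:ℝ) ^ ((n:ℝ)) := ek
    _ < (q:ℝ) ^ (((r:ℝ) - 1 - n)/D) * (q:ℝ) ^ ((n:ℝ)) :=
        mul_lt_mul_of_pos_right hαlt (Real.rpow_pos_of_pos hq0 _)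
    _ = (q:ℝ) ^ (((r:ℝ) - 1 - n)/D + (n:ℝ)) := (Real.rpow_add hq0 _ _).symm
    _ = (q:ℝ) ^ ((n:ℝ) - ((n:ℝ) - r + 1) / (C - (r:ℝ) + 1)) := by
        rw [hDdef]
        congr 1
        ring
end

section
/- The affine line 𝔽_q^1 is not Sidorenko for any prime power q > 2: there exist n and A ⊆ 𝔽_q^n of density α such that the number of affine homomorphisms 𝔽_q^1 → A is strictly less than α^q N², where N = q^n. -/
open Pointwise

lemma pow_ineq : ∀ m : ℕ, 1 ≤ m → (m+2)^m < (m+1)^(m+1) := by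
  intro m hm
  induction m with
  | zero => omega
  | succ k ih =>
    rcases Nat.eq_zero_or_pos k with hk | hk
    · subst hk; norm_num
    · have ihk := ih hk
      have h1 : (k+2)^k * (k+3)^(k+1) < (k+1)^(k+1) * (k+3)^(k+1) :=
        Nat.mul_lt_mul_of_lt_of_le ihk (le_refl _) (by positivity)
      have h2 : (k+1)^(k+1) * (k+3)^(k+1) ≤ (k+2)^k * (k+2)^(k+2) := by
        calc (k+1)^(k+1) * (k+3)^(k+1) = ((k+1)*(k+3))^(k+1) := (mul_pow _ _ _).symm
        _ ≤ ((k+2)^2)^(k+1) := Nat.pow_le_pow_left (by nlinarith) _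
        _ = (k+2)^k * (k+2)^(k+2) := by rw [← pow_mul, ← pow_add]; ring_nf
      have h3 : (k+2)^k * (k+3)^(k+1) < (k+2)^k * (k+2)^(k+2) := lt_of_lt_of_le h1 h2
      have := Nat.lt_of_mul_lt_mul_left h3
      convert this using 2 <;> omega

lemma nat_ineq (q : ℕ) (hq : 3 ≤ q) : q^(q-2) < (q-1)^(q-1) := by
  obtain ⟨m, rfl⟩ : ∃ m, q = m + 3 := ⟨q - 3, by omega⟩
  have := pow_ineq (m+1) (by omega)
  convert this using 2 <;> omega

lemma real_ineq (q : ℕ) (hq : 3 ≤ q) :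
    ((q : ℝ) - 1) < (((q:ℝ)-1)/q)^q * ((q:ℝ)^(1:ℕ))^2 := by
  have hq0 : (0:ℝ) < q := by positivity
  have hkey : (q:ℝ)^(q-2) < ((q:ℝ)-1)^(q-1) := by
    have := nat_ineq q hq
    have c1 : ((q^(q-2) : ℕ) : ℝ) = (q:ℝ)^(q-2) := by push_cast; ring
    have c2 : (((q-1)^(q-1) : ℕ) : ℝ) = ((q:ℝ)-1)^(q-1) := by
      push_cast [Nat.cast_sub (by omega : 1 ≤ q)]; ring
    rw [← c1, ← c2]; exact_mod_cast this
  have e1 : (((q:ℝ)-1)/q)^q * ((q:ℝ)^(1:ℕ))^2 = ((q:ℝ)-1)^q * (q:ℝ)^2 / (q:ℝ)^q := by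
    field_simp
    rw [div_pow, div_mul_cancel₀ _ (pow_ne_zero _ hq0.ne')]
  rw [e1]
  rw [lt_div_iff₀ (by positivity)]
  have e2 : ((q:ℝ)-1) * (q:ℝ)^q = ((q:ℝ)-1) * (q:ℝ)^(q-2) * (q:ℝ)^2 := by
    rw [mul_assoc, ← pow_add]
    congr 2
    omega
  rw [e2]
  have e3 : ((q:ℝ)-1)^q = ((q:ℝ)-1)^(q-1) * ((q:ℝ)-1) := by
    rw [← pow_succ]
    congr 1
    omega
  rw [e3]
  have h1 : (0:ℝ) < (q:ℝ)-1 := by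
    have : (1:ℝ) < q := by exact_mod_cast (by omega : 1 < q)
    linarith
  have step := mul_lt_mul_of_pos_right (mul_lt_mul_of_pos_left hkey h1) (pow_pos hq0 2)
  calc ((q:ℝ)-1) * (q:ℝ)^(q-2) * (q:ℝ)^2 < ((q:ℝ)-1) * ((q:ℝ)-1)^(q-1) * (q:ℝ)^2 := step
  _ = ((q:ℝ)-1)^(q-1) * ((q:ℝ)-1) * (q:ℝ)^2 := by ring


lemma ncard_compl_zero (F : Type*) [Field F] [Fintype F] :
    (({0}ᶜ : Set (Fin 1 → F)).ncard) = Fintype.card F - 1 := by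
  have h := Set.ncard_add_ncard_compl ({0} : Set (Fin 1 → F))
  rw [Set.ncard_singleton, Nat.card_eq_fintype_card, Fintype.card_pi] at h
  simp at h
  omega

lemma affHom_const (F : Type*) [Field F] (A : Set (Fin 1 → F)) (h0 : (0 : Fin 1 → F) ∉ A) :
    affHomSet F (Set.univ : Set F) A
      = (fun (a : Fin 1 → F) => fun (_ : (Set.univ : Set F)) => a) '' A := by
  ext f
  constructor
  · rintro ⟨⟨φ, hφ⟩, hA⟩
    have key : ∀ c : F, φ c = c • φ.linear 1 + φ 0 := by
      intro c
      have := φ.map_vadd (0 : F) c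
      simp only [vadd_eq_add, add_zero] at this
      rw [this]
      have : φ.linear c = c • φ.linear 1 := by
        rw [← φ.linear.map_smul]; norm_num
      rw [this]
    set d := φ.linear 1 with hd
    by_cases hdz : d = 0
    · refine ⟨φ 0, ?_, ?_⟩
      · have := hA ⟨0, Set.mem_univ 0⟩
        rwa [hφ, key, hdz, smul_zero, zero_add] at this
      · funext x
        show φ 0 = f x
        rw [hφ x, key (x : F), hdz, smul_zero, zero_add]
    · exfalso
      have hd0 : d 0 ≠ 0 := by
        intro h
        apply hdz
        funext i
        rw [Subsingleton.elim i 0, h]; rfl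
      set c := -(φ 0 0) / (d 0) with hc
      have : φ c = 0 := by
        rw [key]
        funext i
        rw [Subsingleton.elim i 0]
        simp only [Pi.add_apply, Pi.smul_apply, smul_eq_mul, Pi.zero_apply]
        field_simp [hc]
        rw [hc, div_mul_cancel₀ _ hd0]; ring
      have h2 := hA ⟨c, Set.mem_univ c⟩
      rw [hφ, this] at h2
      exact h0 h2
  · rintro ⟨a, ha, rfl⟩
    exact ⟨⟨AffineMap.const F F a, fun x => rfl⟩, fun x => ha⟩

lemma affHom_card (F : Type*) [Field F] (A : Set (Fin 1 → F)) (h0 : (0 : Fin 1 → F) ∉ A) :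
    (affHomSet F (Set.univ : Set F) A).ncard = A.ncard := by
  rw [affHom_const F A h0]
  apply Set.ncard_image_of_injective
  intro a b hab
  exact congrFun hab ⟨0, Set.mem_univ 0⟩

theorem stmt_13 (F : Type*) [Field F] [Fintype F] (hq : 2 < Fintype.card F) :
    ∃ (n : ℕ) (A : Set (Fin n → F)) (α : ℝ),
      (A.ncard : ℝ) = α * (Fintype.card F : ℝ) ^ n ∧
      ((affHomSet F (Set.univ : Set F) A).ncard : ℝ) <
        α ^ (Fintype.card F) * ((Fintype.card F : ℝ) ^ n) ^ 2 := by
  set q := Fintype.card F with hqdef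
  have hq3 : 3 ≤ q := hq
  have hq0 : (0:ℝ) < q := by positivity
  refine ⟨1, ({0}ᶜ : Set (Fin 1 → F)), ((q:ℝ)-1)/q, ?_, ?_⟩
  · rw [ncard_compl_zero]
    rw [Nat.cast_sub (by omega : 1 ≤ q)]
    field_simp
    norm_num
  · rw [affHom_card F _ (by simp), ncard_compl_zero,
      Nat.cast_sub (by omega : 1 ≤ q)]
    push_cast
    exact real_ineq q hq3
end

section
/- The hexagonal configuration C₆ = {0, e₁, e₂, e₃, e₄, e₁+e₂+e₃+e₄} ⊆ 𝔽_2^4 satisfies C₆ + C₆ = 𝔽_2^4; in particular ω^→(C₆) = 4. -/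
open Pointwise

def C6 : Set (Fin 4 → ZMod 2) :=
  {0, Pi.single 0 1, Pi.single 1 1, Pi.single 2 1, Pi.single 3 1,
    Pi.single 0 1 + Pi.single 1 1 + Pi.single 2 1 + Pi.single 3 1}

lemma C6_add : C6 + C6 = Set.univ := by
  ext v
  simp only [Set.mem_univ, iff_true, Set.mem_add, C6, Set.mem_insert_iff,
    Set.mem_singleton_iff]
  revert v
  decide

theorem stmt_15 : C6 + C6 = Set.univ ∧ omegaLin (ZMod 2) (C6 + C6) = 4 := by
  refine ⟨C6_add, ?_⟩
  rw [C6_add, omegaLin]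
  have h4 : Module.finrank (ZMod 2) (Fin 4 → ZMod 2) = 4 := by
    simp
  apply le_antisymm
  · apply csSup_le
    · exact ⟨4, ⊤, by simpa using h4, by simp⟩
    · rintro d ⟨W, hW, -⟩
      exact hW ▸ le_trans (Submodule.finrank_le W) h4.le
  · apply le_csSup
    · refine ⟨4, ?_⟩
      rintro d ⟨W, hW, -⟩
      exact hW ▸ le_trans (Submodule.finrank_le W) h4.le
    · exact ⟨⊤, by simpa using h4, by simp⟩
end

section
/- Let q be a prime power, and for t ≥ 2 let m_q(t) be the minimum n such that every A ⊆ 𝔽_q^n with |A| ≥ q^{n−t+1} satisfies ω^→(A) ≥ t. Then R_q(2, t) ≤ m_q(t): for n = m_q(t), every projectively determined red-blue coloring of 𝔽_q^n ∖ {0} contains either a linear 2-space with all nonzero vectors red or a linear t-space with all nonzero vectors blue. -/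
set_option maxHeartbeats 1000000
set_option synthInstance.maxHeartbeats 400000



open Pointwise

open Module

section helpers
variable {F : Type*} [Field F] {V : Type*} [AddCommGroup V] [Module F V]

lemma my_exists_submodule_finrank_eq [FiniteDimensional F V] (k : ℕ) (h : k ≤ finrank F V) :
    ∃ W : Submodule F V, finrank F W = k := by
  classical
  let b := Module.finBasis F V
  refine ⟨Submodule.span F (Set.range (b ∘ Fin.castLE h)), ?_⟩
  rw [finrank_span_eq_card (b.linearIndependent.comp _ (Fin.castLE_injective h))]
  simp

lemma my_exists_le_finrank_eq [FiniteDimensional F V] (W₀ : Submodule F V) (k : ℕ)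
    (h : k ≤ finrank F W₀) : ∃ W : Submodule F V, W ≤ W₀ ∧ finrank F W = k := by
  obtain ⟨W', hW'⟩ := my_exists_submodule_finrank_eq (V := W₀) k h
  exact ⟨W'.map W₀.subtype, Submodule.map_subtype_le _ _,
    by rw [Submodule.finrank_map_subtype_eq]; exact hW'⟩

lemma my_ncard_prod {α β : Type*} (s : Set α) (t : Set β) :
    (s ×ˢ t).ncard = s.ncard * t.ncard := by
  rw [← Nat.card_coe_set_eq, ← Nat.card_coe_set_eq, ← Nat.card_coe_set_eq,
    Nat.card_congr (Equiv.Set.prod s t), Nat.card_prod]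

lemma my_ncard_submodule [Fintype F] [Fintype V] (S : Submodule F V) :
    (S : Set V).ncard = Fintype.card F ^ finrank F S := by
  haveI : Fintype S := Fintype.ofFinite S
  rw [← Nat.card_coe_set_eq]
  have : Nat.card (S : Set V) = Nat.card S := rfl
  rw [this, Nat.card_eq_fintype_card]
  exact card_eq_pow_finrank

lemma my_sup_span_finrank [FiniteDimensional F V] (T : Submodule F V) (v : V) (hv : v ∉ T) :
    finrank F ↥(T ⊔ Submodule.span F {v}) = finrank F T + 1 := by
  have hv0 : v ≠ 0 := fun h => hv (h ▸ T.zero_mem)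
  have hinf : T ⊓ Submodule.span F {v} = ⊥ := by
    rw [Submodule.eq_bot_iff]
    rintro x ⟨hxT, hxs⟩
    obtain ⟨c, rfl⟩ := Submodule.mem_span_singleton.mp hxs
    rcases eq_or_ne c 0 with rfl | hc
    · simp
    · exact absurd ((T.smul_mem_iff hc).mp hxT) hv
  have := Submodule.finrank_sup_add_finrank_inf_eq T (Submodule.span F {v})
  rw [hinf, finrank_bot, finrank_span_singleton hv0] at this
  omega

end helpers


section helpers2
variable {F : Type*} [Field F] {V : Type*} [AddCommGroup V] [Module F V]




lemma my_greedy_step [Fintype F] [Fintype V] (B : Set V) (T : Submodule F V)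
    (hTB : ∀ x ∈ T, x ∈ B → x = 0)
    (hcount : (T : Set V).ncard + (B \ {0}).ncard * ((T : Set V).ncard * Fintype.card F)
      < Fintype.card V) :
    ∃ v : V, v ∉ T ∧ ∀ x ∈ T ⊔ Submodule.span F {v}, x ∈ B → x = 0 := by
  classical
  set D : Set V := (T : Set V) ∪
    (fun p : V × V × F => p.2.2 • (p.1 - p.2.1)) '' ((B \ {0}) ×ˢ ((T : Set V) ×ˢ Set.univ))
    with hD
  have hDcard : D.ncard < Fintype.card V := by
    refine lt_of_le_of_lt ?_ hcount
    refine le_trans (Set.ncard_union_le _ _) ?_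
    gcongr
    refine le_trans (Set.ncard_image_le (Set.toFinite _)) ?_
    rw [my_ncard_prod, my_ncard_prod, Set.ncard_univ, Nat.card_eq_fintype_card]
  have hex : ∃ v : V, v ∉ D := by
    by_contra h
    push_neg at h
    have : D = Set.univ := Set.eq_univ_of_forall h
    rw [this, Set.ncard_univ, Nat.card_eq_fintype_card] at hDcard
    omega
  obtain ⟨v, hv⟩ := hex
  have hvT : v ∉ T := fun h => hv (Or.inl h)
  refine ⟨v, hvT, ?_⟩
  intro x hx hxB
  by_contra hx0
  obtain ⟨u, hu, z, hz, rfl⟩ := Submodule.mem_sup.mp hx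
  obtain ⟨c, rfl⟩ := Submodule.mem_span_singleton.mp hz
  rcases eq_or_ne c 0 with rfl | hc
  · rw [zero_smul, add_zero] at hxB hx0
    exact hx0 (hTB u hu hxB)
  · apply hv
    refine Or.inr ⟨⟨u + c • v, u, c⁻¹⟩, ⟨⟨hxB, hx0⟩, hu, trivial⟩, ?_⟩
    simp only []
    rw [add_sub_cancel_left, smul_smul, inv_mul_cancel₀ hc, one_smul]

lemma my_greedy [Fintype F] [Fintype V] [FiniteDimensional F V] (B : Set V)
    (w : V) (hw : w ≠ 0) (hwB : ∀ c : F, c ≠ 0 → c • w ∉ B)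
    (r : ℕ) (hr : 1 ≤ r)
    (hcount : ∀ j, 1 ≤ j → j < r →
      Fintype.card F ^ j + (B \ {0}).ncard * (Fintype.card F ^ j * Fintype.card F)
        < Fintype.card V) :
    ∃ T : Submodule F V, finrank F T = r ∧ w ∈ T ∧ ∀ x ∈ T, x ∈ B → x = 0 := by
  induction r, hr using Nat.le_induction with
  | base =>
    refine ⟨Submodule.span F {w}, finrank_span_singleton hw, Submodule.mem_span_singleton_self w, ?_⟩
    intro x hx hxB
    obtain ⟨c, rfl⟩ := Submodule.mem_span_singleton.mp hx
    rcases eq_or_ne c 0 with rfl | hc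
    · simp
    · exact absurd hxB (hwB c hc)
  | succ r hr ih =>
    obtain ⟨T, hTrank, hwT, hTB⟩ := ih (fun j h1 h2 => hcount j h1 (by omega))
    have hc2 : (T : Set V).ncard + (B \ {0}).ncard * ((T : Set V).ncard * Fintype.card F)
        < Fintype.card V := by
      simpa [my_ncard_submodule, hTrank] using hcount r hr (by omega)
    obtain ⟨v, hvT, hTB'⟩ := my_greedy_step B T hTB hc2
    refine ⟨T ⊔ Submodule.span F {v}, ?_, Submodule.mem_sup_left hwT, hTB'⟩
    rw [my_sup_span_finrank T v hvT, hTrank]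

end helpers2


section bb
variable {F : Type*} [Field F] [Fintype F]

lemma my_bb {n t : ℕ} (ht2 : 2 ≤ t) (htn : t + 1 ≤ n)
    (B : Set (Fin n → F)) (h0 : (0 : Fin n → F) ∈ B)
    (hscal : ∀ x ∈ B, ∀ c : F, c ≠ 0 → c • x ∈ B)
    (hblock : ∀ U : Submodule F (Fin n → F), finrank F U = t → ∃ x, x ∈ U ∧ x ≠ 0 ∧ x ∈ B)
    (hcard : B.ncard ≤ Fintype.card F ^ (n - t + 1)) :
    ∃ S : Submodule F (Fin n → F), (S : Set (Fin n → F)) = B := by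
  classical
  set q := Fintype.card F with hqdef
  have hq : 2 ≤ q := Fintype.one_lt_card
  have hcardV : Fintype.card (Fin n → F) = q ^ n := by
    rw [card_eq_pow_finrank (K := F) (V := Fin n → F), finrank_fin_fun]
  have hsmul : ∀ (c : F), ∀ x ∈ B, c • x ∈ B := by
    intro c x hx
    rcases eq_or_ne c 0 with rfl | hc
    · simpa using h0
    · exact hscal x hx c hc
  suffices hadd : ∀ a ∈ B, ∀ b ∈ B, a + b ∈ B by
    refine ⟨{ carrier := B
              add_mem' := fun {a b} ha hb => hadd a ha b hb
              zero_mem' := h0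
              smul_mem' := fun c {x} hx => hsmul c x hx }, rfl⟩
  by_contra hcon
  push_neg at hcon
  obtain ⟨a, ha, b, hb, hab⟩ := hcon
  set w := a + b with hwdef
  have hw0 : w ≠ 0 := fun h => hab (h ▸ h0)
  have hwB : ∀ c : F, c ≠ 0 → c • w ∉ B := by
    intro c hc hmem
    exact hab (by simpa [smul_smul, inv_mul_cancel₀ hc] using hscal _ hmem c⁻¹ (inv_ne_zero hc))
  have hb0 : b ≠ 0 := by rintro rfl; exact hab (by simpa [hwdef] using ha)
  have hBfin : B.Finite := Set.toFinite B
  have hB1 : 1 ≤ B.ncard := (Set.ncard_pos (Set.toFinite B)).mpr ⟨0, h0⟩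
  have hBm : (B \ {0}).ncard ≤ q ^ (n - t + 1) - 1 := by
    rw [Set.ncard_diff_singleton_of_mem h0]
    omega
  -- key counting estimate for the greedy construction
  have key : ∀ j, 1 ≤ j → j < t - 1 →
      q ^ j + (B \ {0}).ncard * (q ^ j * q) < Fintype.card (Fin n → F) := by
    intro j h1 h2
    have hjt : q ^ j ≤ q ^ (t - 2) := Nat.pow_le_pow_right (by omega) (by omega)
    have hs1 : 1 ≤ q ^ (n - t + 1) := Nat.one_le_pow _ _ (by omega)
    have hexp : q ^ (t - 2) * (q ^ (n - t + 1) * q) = q ^ n := by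
      rw [← pow_succ, ← pow_add]
      congr 1
      omega
    have hstrict : 1 + (B \ {0}).ncard * q < q ^ (n - t + 1) * q := by
      have h5 : (B \ {0}).ncard * q ≤ (q ^ (n - t + 1) - 1) * q :=
        Nat.mul_le_mul_right _ hBm
      have h6 : (q ^ (n - t + 1) - 1) * q + q = q ^ (n - t + 1) * q := by
        have h7 : (q ^ (n - t + 1) - 1) + 1 = q ^ (n - t + 1) := by omega
        calc (q ^ (n - t + 1) - 1) * q + q = ((q ^ (n - t + 1) - 1) + 1) * q := by ring
        _ = q ^ (n - t + 1) * q := by rw [h7]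
      linarith
    rw [hcardV]
    calc q ^ j + (B \ {0}).ncard * (q ^ j * q) = q ^ j * (1 + (B \ {0}).ncard * q) := by ring
    _ ≤ q ^ (t - 2) * (1 + (B \ {0}).ncard * q) := Nat.mul_le_mul_right _ hjt
    _ < q ^ (t - 2) * (q ^ (n - t + 1) * q) :=
        mul_lt_mul_of_pos_left hstrict (Nat.pow_pos (by omega))
    _ = q ^ n := hexp
  obtain ⟨T, hTrank, hwT, hTB⟩ := my_greedy B w hw0 hwB (t - 1) (by omega) key
  -- the quotient
  have hfinQ : finrank F ((Fin n → F) ⧸ T) = n - t + 1 := by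
    have h := Submodule.finrank_quotient_add_finrank T
    rw [hTrank, finrank_fin_fun] at h
    omega
  haveI : Fintype ((Fin n → F) ⧸ T) := Fintype.ofFinite _
  have hQcard : Nat.card ((Fin n → F) ⧸ T) = q ^ (n - t + 1) := by
    rw [Nat.card_eq_fintype_card, card_eq_pow_finrank (K := F), hfinQ]
  have hsurj : ∀ z : (Fin n → F) ⧸ T, z ≠ 0 →
      ∃ x : Fin n → F, (x ∈ B ∧ x ≠ 0) ∧ T.mkQ x = z := by
    intro z hz
    set U := Submodule.comap T.mkQ (Submodule.span F {z}) with hU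
    have hTU : T ≤ U := by
      intro x hx
      have : T.mkQ x = 0 := (Submodule.Quotient.mk_eq_zero T).mpr hx
      simp only [hU, Submodule.mem_comap, this]
      exact Submodule.zero_mem _
    have hUrank : finrank F U = t := by
      have h1 := LinearMap.finrank_range_add_finrank_ker (T.mkQ.comp U.subtype)
      have hker : LinearMap.ker (T.mkQ.comp U.subtype) = Submodule.comap U.subtype T := by
        rw [LinearMap.ker_comp, Submodule.ker_mkQ]
      have hrange : LinearMap.range (T.mkQ.comp U.subtype) = Submodule.span F {z} := by
        rw [LinearMap.range_comp, Submodule.range_subtype, Submodule.map_comap_eq,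
          Submodule.range_mkQ, top_inf_eq]
      have hkerrank : finrank F (LinearMap.ker (T.mkQ.comp U.subtype)) = t - 1 := by
        rw [hker, ← hTrank]
        exact (Submodule.comapSubtypeEquivOfLe hTU).finrank_eq
      rw [hrange, hkerrank, finrank_span_singleton hz] at h1
      omega
    obtain ⟨x, hxU, hx0, hxB⟩ := hblock U hUrank
    have hxz : T.mkQ x ∈ Submodule.span F {z} := hxU
    obtain ⟨c, hc⟩ := Submodule.mem_span_singleton.mp hxz
    have hc0 : c ≠ 0 := by
      rintro rfl
      rw [zero_smul] at hc
      have hxT : x ∈ T := (Submodule.Quotient.mk_eq_zero T).mp (by rw [← Submodule.mkQ_apply, ← hc])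
      exact hx0 (hTB x hxT hxB)
    refine ⟨c⁻¹ • x, ⟨hscal x hxB c⁻¹ (inv_ne_zero hc0), smul_ne_zero (inv_ne_zero hc0) hx0⟩, ?_⟩
    rw [map_smul, ← hc, smul_smul, inv_mul_cancel₀ hc0, one_smul]
  -- the surjection from B \ {0} onto the nonzero quotient vectors
  set K : Set ((Fin n → F) ⧸ T) := {z | z ≠ 0} with hK
  have hKcard : Nat.card K = q ^ (n - t + 1) - 1 := by
    have hKe : K = Set.univ \ {0} := by
      ext z; simp [hK]
    rw [Nat.card_coe_set_eq, hKe, Set.ncard_diff_singleton_of_mem (Set.mem_univ _),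
      Set.ncard_univ, hQcard]
  have ha0 : a ≠ 0 := by rintro rfl; exact hab (by simpa [hwdef] using hb)
  have hmem : ∀ x : Fin n → F, x ∈ B \ {0} → T.mkQ x ∈ K := by
    rintro x ⟨hxB, hx0⟩
    intro hzero
    have hxT : x ∈ T := (Submodule.Quotient.mk_eq_zero T).mp (by rw [← Submodule.mkQ_apply]; exact hzero)
    exact hx0 (hTB x hxT hxB)
  let f : ↥(B \ {0}) → ↥K := fun x => ⟨T.mkQ x, hmem x x.2⟩
  have hfs : Function.Surjective f := by
    rintro ⟨z, hz⟩
    obtain ⟨x, ⟨hxB, hx0⟩, hxz⟩ := hsurj z hz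
    exact ⟨⟨x, hxB, hx0⟩, Subtype.ext hxz⟩
  have hd : Nat.card ↥(B \ {0}) = B.ncard - 1 := by
    rw [Nat.card_coe_set_eq, Set.ncard_diff_singleton_of_mem h0]
  have hle : Nat.card ↥K ≤ Nat.card ↥(B \ {0}) := Nat.card_le_card_of_surjective f hfs
  have hs1 : 1 ≤ q ^ (n - t + 1) := Nat.one_le_pow _ _ (by omega)
  have heq : Nat.card ↥(B \ {0}) = Nat.card ↥K := by
    rw [hd, hKcard] at *
    omega
  have hbij : Function.Bijective f := (Nat.bijective_iff_surjective_and_card f).mpr ⟨hfs, heq⟩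
  have hmb : (-b : Fin n → F) ∈ B := by
    simpa using hscal b hb (-1) (by norm_num)
  have hmb0 : (-b : Fin n → F) ≠ 0 := neg_ne_zero.mpr hb0
  have hne : a ≠ -b := by
    intro h
    apply hw0
    rw [hwdef, h]
    simp
  have hfeq : f ⟨a, ha, ha0⟩ = f ⟨-b, hmb, hmb0⟩ := by
    apply Subtype.ext
    show T.mkQ a = T.mkQ (-b)
    rw [Submodule.mkQ_apply, Submodule.mkQ_apply, Submodule.Quotient.eq]
    simpa [sub_neg_eq_add] using hwT
  have := hbij.1 hfeq
  replace this := congrArg Subtype.val this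
  exact hne this
end bb



section main
open Module
variable {F : Type*} [Field F] [Fintype F] {n : ℕ}

lemma my_dirSet_subset (H : Submodule F (Fin n → F)) :
    dirSet F (H : Set (Fin n → F)) ⊆ (H : Set (Fin n → F)) := by
  rintro d ⟨x, hx⟩
  have h1 := hx 1
  have h0 := hx 0
  rw [one_smul] at h1
  rw [zero_smul, add_zero] at h0
  simpa using H.sub_mem h1 h0

lemma my_omega_le (A : Set (Fin n → F)) (H : Submodule F (Fin n → F))
    (hsub : A ∪ {0} ⊆ (H : Set (Fin n → F))) : omegaLin F A ≤ finrank F H := by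
  unfold omegaLin
  refine csSup_le ⟨0, ⊥, finrank_bot F _, by simp⟩ ?_
  rintro d ⟨W, rfl, hW⟩
  have hle : W ≤ H := fun x hx => hsub (hW hx)
  exact Submodule.finrank_mono hle

lemma my_extract (t : ℕ) (A : Set (Fin n → F)) (h : t ≤ omegaLin F (dirSet F A)) :
    ∃ W : Submodule F (Fin n → F), finrank F W = t ∧
      (W : Set (Fin n → F)) ⊆ dirSet F A ∪ {0} := by
  unfold omegaLin at h
  set Sω := {d : ℕ | ∃ W : Submodule F (Fin n → F), finrank F W = d ∧
    (W : Set (Fin n → F)) ⊆ dirSet F A ∪ {0}} with hSω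
  have hne : Sω.Nonempty := ⟨0, ⊥, finrank_bot F _, by simp⟩
  have hbdd : ∀ d ∈ Sω, d ≤ n := by
    rintro d ⟨W, rfl, -⟩
    simpa [finrank_fin_fun] using Submodule.finrank_le W
  have hmem : sSup Sω ∈ Sω := Nat.sSup_mem hne ⟨n, fun d hd => hbdd d hd⟩
  obtain ⟨W₀, hW₀, hW₀sub⟩ := hmem
  obtain ⟨W, hWle, hWrank⟩ := my_exists_le_finrank_eq W₀ t (hW₀ ▸ h)
  exact ⟨W, hWrank, Set.Subset.trans hWle hW₀sub⟩

lemma my_red_plane (R : Set (Fin n → F)) (hR0 : (0 : Fin n → F) ∉ R)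
    (hRproj : ∀ x ∈ R, ∀ c : F, c ≠ 0 → c • x ∈ R)
    (d : Fin n → F) (hd : d ∈ R) (x : Fin n → F) (hx : ∀ c : F, x + c • d ∈ R) :
    ∃ U : Submodule F (Fin n → F), finrank F U = 2 ∧
      (U : Set (Fin n → F)) \ {0} ⊆ R := by
  have hd0 : d ≠ 0 := fun h => hR0 (h ▸ hd)
  have hxd : ∀ a : F, x ≠ a • d := by
    intro a h
    apply hR0
    have h2 := hx (-a)
    rw [h, neg_smul] at h2
    simpa using h2
  have hx0 : x ≠ 0 := by simpa using hxd 0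
  have hdx : d ∉ Submodule.span F {x} := by
    intro h
    obtain ⟨c, rfl⟩ := Submodule.mem_span_singleton.mp h
    have hc : c ≠ 0 := by rintro rfl; simp at hd0
    exact hxd c⁻¹ (by rw [smul_smul, inv_mul_cancel₀ hc, one_smul])
  refine ⟨Submodule.span F {x} ⊔ Submodule.span F {d}, ?_, ?_⟩
  · rw [my_sup_span_finrank _ d hdx, finrank_span_singleton hx0]
  · rintro v ⟨hv, hv0⟩
    simp only [Set.mem_singleton_iff] at hv0
    rw [← Submodule.span_union, show ({x} ∪ {d} : Set (Fin n → F)) = {x, d} by rfl] at hv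
    obtain ⟨m, c, hmc⟩ := Submodule.mem_span_pair.mp hv
    rcases eq_or_ne m 0 with rfl | hm
    · rw [zero_smul, zero_add] at hmc
      have hc : c ≠ 0 := by rintro rfl; rw [zero_smul] at hmc; exact hv0 hmc.symm
      rw [← hmc]
      exact hRproj d hd c hc
    · have : v = m • (x + (m⁻¹ * c) • d) := by
        rw [smul_add, smul_smul, ← mul_assoc, mul_inv_cancel₀ hm, one_mul, hmc]
      rw [this]
      exact hRproj _ (hx _) m hm
end main

theorem stmt_16 (F : Type*) [Field F] [Fintype F] (t n : ℕ) (ht : 2 ≤ t)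
    (hext : ∀ A : Set (Fin n → F),
      (Fintype.card F : ℝ) ^ ((n : ℤ) - t + 1) ≤ (A.ncard : ℝ) →
      t ≤ omegaLin F (dirSet F A))
    (R Bl : Set (Fin n → F))
    (hunion : R ∪ Bl = {x : Fin n → F | x ≠ 0}) (hdisj : Disjoint R Bl)
    (hRproj : ∀ x ∈ R, ∀ c : F, c ≠ 0 → c • x ∈ R)
    (hBproj : ∀ x ∈ Bl, ∀ c : F, c ≠ 0 → c • x ∈ Bl) :
    (∃ U : Submodule F (Fin n → F), Module.finrank F U = 2 ∧
      (U : Set (Fin n → F)) \ {0} ⊆ R) ∨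
    (∃ U : Submodule F (Fin n → F), Module.finrank F U = t ∧
      (U : Set (Fin n → F)) \ {0} ⊆ Bl) := by
  classical
  have hq2 : 2 ≤ Fintype.card F := Fintype.one_lt_card
  set q := Fintype.card F with hqdef
  have hR0 : (0 : Fin n → F) ∉ R := by
    intro h
    have h2 : (0 : Fin n → F) ∈ R ∪ Bl := Or.inl h
    rw [hunion] at h2
    exact h2 rfl
  have hmem : ∀ x : Fin n → F, x ≠ 0 → x ∈ R ∨ x ∈ Bl := by
    intro x hx
    have h2 : x ∈ R ∪ Bl := by rw [hunion]; exact hx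
    exact h2
  -- real-power cast helper
  have hpow : ∀ k : ℕ, ((n : ℤ) - t + 1) ≤ (k : ℤ) →
      (q : ℝ) ^ ((n : ℤ) - t + 1) ≤ ((q ^ k : ℕ) : ℝ) := by
    intro k hk
    have h1 : (1 : ℝ) ≤ (q : ℝ) := by exact_mod_cast Nat.one_le_of_lt hq2
    have h2 : (q : ℝ) ^ ((n : ℤ) - t + 1) ≤ (q : ℝ) ^ (k : ℤ) := zpow_right_mono₀ h1 hk
    calc (q : ℝ) ^ ((n : ℤ) - t + 1) ≤ (q : ℝ) ^ (k : ℤ) := h2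
    _ = ((q ^ k : ℕ) : ℝ) := by push_cast [zpow_natCast]; ring
  -- Step 1 : t ≤ n
  have ht1 : t ≤ n := by
    have h := hext Set.univ ?_
    · refine le_trans h (le_trans (my_omega_le _ ⊤ (by simp)) ?_)
      simp [finrank_fin_fun]
    · rw [Set.ncard_univ, Nat.card_eq_fintype_card]
      have hcV : Fintype.card (Fin n → F) = q ^ n := by
        rw [card_eq_pow_finrank (K := F) (V := Fin n → F), finrank_fin_fun]
      rw [hcV]
      exact hpow n (by omega)
  -- Step 2 : t + 1 ≤ n
  have ht2 : t + 1 ≤ n := by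
    haveI : NeZero n := ⟨by omega⟩
    set π : (Fin n → F) →ₗ[F] F := LinearMap.proj (0 : Fin n) with hπ
    have hπsurj : Function.Surjective π := fun a => ⟨fun _ => a, rfl⟩
    have hrange : LinearMap.range π = ⊤ := LinearMap.range_eq_top.mpr hπsurj
    have hker : finrank F (LinearMap.ker π) = n - 1 := by
      have h := LinearMap.finrank_range_add_finrank_ker π
      rw [hrange, finrank_top, finrank_fin_fun, Module.finrank_self] at h
      omega
    have h := hext (LinearMap.ker π : Set (Fin n → F)) ?_
    · have h2 : omegaLin F (dirSet F (LinearMap.ker π : Set (Fin n → F))) ≤ n - 1 := by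
        refine le_trans (my_omega_le _ (LinearMap.ker π) ?_) (le_of_eq hker)
        apply Set.union_subset (my_dirSet_subset _)
        simp
      omega
    · rw [my_ncard_submodule, hker]
      exact hpow (n - 1) (by rw [Nat.cast_sub (by omega : 1 ≤ n)]; push_cast; omega)
  -- the threshold
  set k := n - t + 1 with hkdef
  have hkcast : ((n : ℤ) - t + 1) = (k : ℤ) := by
    rw [hkdef, Nat.cast_add, Nat.cast_sub (by omega : t ≤ n)]; push_cast; ring
  by_cases hRcard : q ^ k ≤ R.ncard
  · -- many red points : use directions of R
    have h := hext R (le_trans (hpow k (by omega)) (by exact_mod_cast hRcard))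
    obtain ⟨W, hWrank, hWsub⟩ := my_extract t R h
    by_cases hall : (W : Set (Fin n → F)) \ {0} ⊆ Bl
    · exact Or.inr ⟨W, hWrank, hall⟩
    · rw [Set.not_subset] at hall
      obtain ⟨d, ⟨hdW, hd0'⟩, hdnB⟩ := hall
      have hd0 : d ≠ 0 := hd0'
      have hdR : d ∈ R := (hmem d hd0).resolve_right hdnB
      have hdir : d ∈ dirSet F R := by
        rcases hWsub hdW with h' | h'
        · exact h'
        · exact absurd h' hd0
      obtain ⟨x, hx⟩ := hdir
      exact Or.inl (my_red_plane R hR0 hRproj d hdR x hx)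
  · -- few red points : Bose-Burton forces R ∪ {0} to be a subspace
    push_neg at hRcard
    by_cases hblue : ∃ U : Submodule F (Fin n → F), Module.finrank F U = t ∧
        (U : Set (Fin n → F)) \ {0} ⊆ Bl
    · exact Or.inr hblue
    · push_neg at hblue
      set B : Set (Fin n → F) := insert 0 R with hBdef
      have h0B : (0 : Fin n → F) ∈ B := Set.mem_insert _ _
      have hscalB : ∀ x ∈ B, ∀ c : F, c ≠ 0 → c • x ∈ B := by
        intro x hx c hc
        rcases Set.mem_insert_iff.mp hx with rfl | hx'
        · simpa using h0B
        · exact Set.mem_insert_of_mem _ (hRproj x hx' c hc)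
      have hblockB : ∀ U : Submodule F (Fin n → F), Module.finrank F U = t →
          ∃ x, x ∈ U ∧ x ≠ 0 ∧ x ∈ B := by
        intro U hU
        have h2 := hblue U hU
        rw [Set.not_subset] at h2
        obtain ⟨x, ⟨hxU, hx0'⟩, hxnB⟩ := h2
        have hx0 : x ≠ 0 := hx0'
        exact ⟨x, hxU, hx0, Set.mem_insert_of_mem _ ((hmem x hx0).resolve_right hxnB)⟩
      have hcardB : B.ncard ≤ q ^ k := by
        rw [hBdef, Set.ncard_insert_of_notMem hR0 (Set.toFinite R)]
        omega
      obtain ⟨S, hS⟩ := my_bb ht ht2 B h0B hscalB hblockB hcardB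
      have hSrank : 2 ≤ Module.finrank F S := by
        by_contra hlt
        push_neg at hlt
        obtain ⟨S', hS'⟩ := Submodule.exists_isCompl S
        have hrank' : Module.finrank F S + Module.finrank F S' = n := by
          rw [Submodule.finrank_add_eq_of_isCompl hS', finrank_fin_fun]
        obtain ⟨U, hUle, hUrank⟩ := my_exists_le_finrank_eq S' t (by omega)
        obtain ⟨x, hxU, hx0, hxB⟩ := hblockB U hUrank
        have hxS : x ∈ S := by rw [← SetLike.mem_coe, hS]; exact hxB
        have : x ∈ S ⊓ S' := ⟨hxS, hUle hxU⟩
        rw [hS'.inf_eq_bot] at this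
        exact hx0 this
      obtain ⟨U, hUle, hUrank⟩ := my_exists_le_finrank_eq S 2 hSrank
      refine Or.inl ⟨U, hUrank, ?_⟩
      rintro x ⟨hxU, hx0'⟩
      have hx0 : x ≠ 0 := hx0'
      have hxB : x ∈ B := by rw [← hS]; exact SetLike.mem_coe.mpr (hUle hxU)
      rcases Set.mem_insert_iff.mp hxB with rfl | hxR
      · exact absurd rfl hx0
      · exact hxR
end

section
/- Let B ⊆ 𝔽_q^m have affine rank r ≥ 1 and let 𝓕 be a family of affine configurations. Let n ≥ r, N = q^n, and suppose ex_aff(n, B × 𝓕) = αN. If c(B, n, α) denotes the minimum over all A ⊆ 𝔽_q^n of density α of the number of non-degenerate affine homomorphisms B → A, then c(B, n, α) ≤ q^{r−1} N^{r−1} · ex_aff(n − r + 1, 𝓕). -/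
open Pointwise

noncomputable def exAffFam (F : Type*) [Field F] [Fintype F] {ι : Type*}
    {V : ι → Type*} [∀ i, AddCommGroup (V i)] [∀ i, Module F (V i)]
    (n : ℕ) (Fam : ∀ i, Set (V i)) : ℕ :=
  sSup {k : ℕ | ∃ A : Set (Fin n → F), A.ncard = k ∧
    ∀ i, ∀ f ∈ affHomSet F (Fam i) A, ¬ IsNondegen F (Fam i) f}


set_option maxHeartbeats 1600000

open Module Submodule

section Helpers

lemma fiber_count {X Y : Type*} [Finite Y] {S : Set X} (hS : S.Finite) (h : X → Y) (M : ℕ)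
    (hm : ∀ y : Y, {x ∈ S | h x = y}.ncard ≤ M) : S.ncard ≤ Nat.card Y * M := by
  classical
  cases nonempty_fintype Y
  rw [Set.ncard_eq_toFinset_card _ hS,
    Finset.card_eq_sum_card_fiberwise (t := Finset.univ) (f := h) (fun x _ => Finset.mem_univ _)]
  calc ∑ y ∈ Finset.univ, (hS.toFinset.filter (fun x => h x = y)).card
      ≤ ∑ _y ∈ (Finset.univ : Finset Y), M := by
        refine Finset.sum_le_sum fun y _ => ?_
        have hcoe : ((hS.toFinset.filter (fun x => h x = y)) : Set X) = {x ∈ S | h x = y} := by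
          ext x; simp [hS.mem_toFinset]
        rw [← Set.ncard_coe_finset, hcoe]; exact hm y
    _ = Nat.card Y * M := by simp [Nat.card_eq_fintype_card, mul_comm]

lemma vectorSpan_image {F V W : Type*} [Field F] [AddCommGroup V] [Module F V] [AddCommGroup W]
    [Module F W] (φ : V →ᵃ[F] W) (s : Set V) :
    vectorSpan F (φ '' s) = (vectorSpan F s).map φ.linear := by
  rw [← direction_affineSpan, ← AffineSubspace.map_span, AffineSubspace.map_direction,
    direction_affineSpan]

lemma vectorSpan_prod' {F V W : Type*} [Field F] [AddCommGroup V] [Module F V] [AddCommGroup W]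
    [Module F W] {s : Set V} {t : Set W} (hs : s.Nonempty) (ht : t.Nonempty) :
    vectorSpan F (s ×ˢ t) = (vectorSpan F s).prod (vectorSpan F t) := by
  obtain ⟨x0, hx0⟩ := hs
  obtain ⟨y0, hy0⟩ := ht
  apply le_antisymm
  · rw [vectorSpan_def, Submodule.span_le]
    rintro x hx
    obtain ⟨a, ha, b, hb, rfl⟩ := Set.mem_vsub.mp hx
    exact ⟨vsub_mem_vectorSpan F ha.1 hb.1, vsub_mem_vectorSpan F ha.2 hb.2⟩
  · rintro ⟨x, y⟩ ⟨hx, hy⟩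
    have h1 : ((x, 0) : V × W) ∈ vectorSpan F (s ×ˢ t) := by
      have hle : (vectorSpan F s).map (LinearMap.inl F V W) ≤ vectorSpan F (s ×ˢ t) := by
        rw [vectorSpan_def, Submodule.map_span, Submodule.span_le]
        rintro z ⟨u, hu, rfl⟩
        obtain ⟨a, ha, b, hb, rfl⟩ := Set.mem_vsub.mp hu
        have : LinearMap.inl F V W (a -ᵥ b) = (a, y0) -ᵥ (b, y0) := by
          simp [vsub_eq_sub, Prod.ext_iff]
        rw [this]
        exact vsub_mem_vectorSpan F (Set.mk_mem_prod ha hy0) (Set.mk_mem_prod hb hy0)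
      exact hle ⟨x, hx, rfl⟩
    have h2 : ((0, y) : V × W) ∈ vectorSpan F (s ×ˢ t) := by
      have hle : (vectorSpan F t).map (LinearMap.inr F V W) ≤ vectorSpan F (s ×ˢ t) := by
        rw [vectorSpan_def, Submodule.map_span, Submodule.span_le]
        rintro z ⟨u, hu, rfl⟩
        obtain ⟨a, ha, b, hb, rfl⟩ := Set.mem_vsub.mp hu
        have : LinearMap.inr F V W (a -ᵥ b) = (x0, a) -ᵥ (x0, b) := by
          simp [vsub_eq_sub, Prod.ext_iff]
        rw [this]
        exact vsub_mem_vectorSpan F (Set.mk_mem_prod hx0 ha) (Set.mk_mem_prod hx0 hb)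
      exact hle ⟨y, hy, rfl⟩
    have : ((x, y) : V × W) = (x, 0) + (0, y) := by simp
    rw [this]
    exact add_mem h1 h2

set_option linter.unusedVariables false in
/-- The obvious linear equivalence between `p.prod q` and `p × q`. -/
def submoduleProdEquiv {R M N : Type*} [Ring R] [AddCommGroup M] [Module R M] [AddCommGroup N]
    [Module R N] (p : Submodule R M) (q : Submodule R N) : (p.prod q) ≃ₗ[R] p × q where
  toFun x := (⟨x.1.1, x.2.1⟩, ⟨x.1.2, x.2.2⟩)
  invFun x := ⟨(x.1.1, x.2.1), ⟨x.1.2, x.2.2⟩⟩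
  left_inv x := rfl
  right_inv x := rfl
  map_add' x y := rfl
  map_smul' c x := rfl

lemma finrank_submodule_prod {F M N : Type*} [Field F] [AddCommGroup M] [Module F M]
    [AddCommGroup N] [Module F N] [FiniteDimensional F M] [FiniteDimensional F N]
    (p : Submodule F M) (q : Submodule F N) :
    finrank F (p.prod q) = finrank F p + finrank F q := by
  rw [(submoduleProdEquiv p q).finrank_eq, Module.finrank_prod]

end Helpers

lemma key_count {F : Type*} [Field F] [Fintype F] {ι : Type*} {md : ι → ℕ}
    {m : ℕ} {B : Set (Fin m → F)} {Fam : ∀ i, Set (Fin (md i) → F)}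
    {r : ℕ} (hB : B.Nonempty) (hr : affRank F B = r) (hr1 : 1 ≤ r)
    {n : ℕ} (hn : r ≤ n) (A0 : Set (Fin n → F))
    (hA0 : ∀ i, ∀ f ∈ affHomSet F (B ×ˢ Fam i) A0, ¬ IsNondegen F (B ×ˢ Fam i) f) :
    ({f ∈ affHomSet F B A0 | IsNondegen F B f}).ncard ≤
      Fintype.card F ^ (r - 1) * (Fintype.card F ^ n) ^ (r - 1) *
        exAffFam F (n - r + 1) Fam := by
  classical
  obtain ⟨b0, hb0⟩ := hB
  set q := Fintype.card F with hq
  set E := exAffFam F (n - r + 1) Fam with hEdef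
  set U : Submodule F (Fin m → F) := vectorSpan F B with hUdef
  have hUrank : finrank F U + 1 = r := by
    rw [← hr]; unfold affRank; rw [direction_affineSpan]
  obtain ⟨U', hU'⟩ := U.exists_isCompl
  set projU := U.linearProjOfIsCompl U' hU' with hprojU
  have hspanU : Submodule.span F {u : U | ∃ b ∈ B, (u : Fin m → F) = b - b0} = ⊤ := by
    apply Submodule.map_injective_of_injective U.injective_subtype
    rw [Submodule.map_span, Submodule.map_subtype_top]
    have himg : U.subtype '' {u : U | ∃ b ∈ B, (u : Fin m → F) = b - b0} = (· -ᵥ b0) '' B := by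
      ext x; constructor
      · rintro ⟨u, ⟨b, hb, hu⟩, rfl⟩; exact ⟨b, hb, by simp [vsub_eq_sub, hu]⟩
      · rintro ⟨b, hb, rfl⟩
        exact ⟨⟨b - b0, by rw [← vsub_eq_sub]; exact vsub_mem_vectorSpan F hb hb0⟩,
          ⟨b, hb, rfl⟩, by simp [vsub_eq_sub]⟩
    rw [himg, ← vectorSpan_eq_span_vsub_set_right F hb0]
  set H := {f ∈ affHomSet F B A0 | IsNondegen F B f} with hHdef
  set Lof : (↥B → Fin n → F) → (U →ₗ[F] (Fin n → F)) := fun f =>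
    if hf : ∃ φ : (Fin m → F) →ᵃ[F] (Fin n → F), ∀ x : B, f x = φ x.1
    then (Classical.choose hf).linear.comp U.subtype else 0 with hLof
  have hdecomp : ∀ f ∈ H, ∀ (b : Fin m → F) (hb : b ∈ B) (hu : b - b0 ∈ U),
      f ⟨b, hb⟩ = f ⟨b0, hb0⟩ + Lof f ⟨b - b0, hu⟩ := by
    intro f hf b hb hu
    have hex : ∃ φ : (Fin m → F) →ᵃ[F] (Fin n → F), ∀ x : B, f x = φ x.1 := hf.1.1
    have hLf : Lof f = (Classical.choose hex).linear.comp U.subtype := dif_pos hex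
    set φ := Classical.choose hex with hφdef
    have hφ := Classical.choose_spec hex
    rw [hφ ⟨b, hb⟩, hφ ⟨b0, hb0⟩, hLf]
    show φ b = φ b0 + φ.linear (b - b0)
    have h3 : φ b = φ.linear (b - b0) +ᵥ φ b0 := by
      conv_lhs => rw [show b = (b - b0) +ᵥ b0 by simp [vadd_eq_add]]
      rw [AffineMap.map_vadd]
    rw [h3, vadd_eq_add, add_comm]
  -- bound each fiber of Lof over H
  have hfiber : ∀ L : U →ₗ[F] (Fin n → F),
      {f ∈ H | Lof f = L}.ncard ≤ q ^ (r - 1) * E := by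
    intro L
    rcases Set.eq_empty_or_nonempty {f ∈ H | Lof f = L} with hne | ⟨f0, hf0H, hf0L⟩
    · simp [hne]
    set W := LinearMap.range L with hWdef
    have hWrank : finrank F W = r - 1 := by
      have himg : (· -ᵥ f0 ⟨b0, hb0⟩) '' Set.range f0
          = ⇑L '' {u : U | ∃ b ∈ B, (u : Fin m → F) = b - b0} := by
        ext x; constructor
        · rintro ⟨y, ⟨⟨b, hb⟩, rfl⟩, rfl⟩
          have hu : b - b0 ∈ U := by rw [← vsub_eq_sub]; exact vsub_mem_vectorSpan F hb hb0
          refine ⟨⟨b - b0, hu⟩, ⟨b, hb, rfl⟩, ?_⟩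
          simp only [vsub_eq_sub]
          rw [hdecomp f0 hf0H b hb hu, hf0L]; abel
        · rintro ⟨u, ⟨b, hb, hub⟩, rfl⟩
          have hu : b - b0 ∈ U := hub ▸ u.2
          refine ⟨f0 ⟨b, hb⟩, ⟨⟨b, hb⟩, rfl⟩, ?_⟩
          simp only [vsub_eq_sub]
          rw [hdecomp f0 hf0H b hb hu, hf0L]
          have h12 : (⟨b - b0, hu⟩ : U) = u := Subtype.ext hub.symm
          rw [h12]; abel
      have hvs : vectorSpan F (Set.range f0) = W := by
        rw [vectorSpan_eq_span_vsub_set_right F (Set.mem_range_self (⟨b0, hb0⟩ : B)), himg,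
          ← Submodule.map_span, hspanU, Submodule.map_top]
      have hnd0 := hf0H.2
      unfold IsNondegen affRank at hnd0
      rw [direction_affineSpan, direction_affineSpan, hvs, ← hUdef] at hnd0
      omega
    obtain ⟨C, hWC⟩ := W.exists_isCompl
    have hCrank : finrank F C = n - r + 1 := by
      have h5 := Submodule.finrank_add_eq_of_isCompl hWC
      rw [hWrank, Module.finrank_fin_fun] at h5
      omega
    obtain ⟨e⟩ := FiniteDimensional.nonempty_linearEquiv_of_finrank_eq
      (hCrank.trans (Module.finrank_fin_fun F).symm)
    set projW := W.linearProjOfIsCompl C hWC with hprojW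
    set projC := C.linearProjOfIsCompl W hWC.symm with hprojC
    set T := {t : Fin n → F | ∀ (b : Fin m → F) (hb : b ∈ B) (hu : b - b0 ∈ U),
      t + L ⟨b - b0, hu⟩ ∈ A0} with hTdef
    have h1 : {f ∈ H | Lof f = L}.ncard ≤ T.ncard := by
      refine Set.ncard_le_ncard_of_injOn (fun f => f ⟨b0, hb0⟩) ?_ ?_ (Set.toFinite T)
      · rintro f ⟨hfH, hfL⟩ b hb hu
        rw [← hfL, ← hdecomp f hfH b hb hu]
        exact hfH.1.2 ⟨b, hb⟩
      · rintro f ⟨hfH, hfL⟩ g ⟨hgH, hgL⟩ hfg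
        funext b
        obtain ⟨b, hb⟩ := b
        have hu : b - b0 ∈ U := by rw [← vsub_eq_sub]; exact vsub_mem_vectorSpan F hb hb0
        have hfg' : f ⟨b0, hb0⟩ = g ⟨b0, hb0⟩ := hfg
        rw [hdecomp f hfH b hb hu, hdecomp g hgH b hb hu, hfL, hgL, hfg']
    have hEbdd : BddAbove {k : ℕ | ∃ A : Set (Fin (n - r + 1) → F), A.ncard = k ∧
        ∀ i, ∀ f ∈ affHomSet F (Fam i) A, ¬ IsNondegen F (Fam i) f} := by
      refine ⟨Fintype.card (Fin (n - r + 1) → F), ?_⟩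
      rintro k ⟨A, rfl, -⟩
      exact le_trans (Set.ncard_le_ncard (Set.subset_univ A) Set.finite_univ)
        (le_of_eq (by rw [Set.ncard_univ, Nat.card_eq_fintype_card]))
    have hslice : ∀ w : W, {t ∈ T | projW t = w}.ncard ≤ E := by
      intro w
      set Sw := {c : Fin (n - r + 1) → F |
        (w : Fin n → F) + (e.symm c : Fin n → F) ∈ T} with hSwdef
      have hSwE : Sw.ncard ≤ E := by
        apply le_csSup hEbdd
        refine ⟨Sw, rfl, ?_⟩
        intro i f hf hnd
        obtain ⟨⟨ψ, hψ⟩, hfval⟩ := hf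
        set M : (Fin (md i) → F) →ₗ[F] (Fin n → F) :=
          C.subtype ∘ₗ e.symm.toLinearMap ∘ₗ ψ.linear with hM
        set Λ : ((Fin m → F) × (Fin (md i) → F)) →ₗ[F] (Fin n → F) :=
          (L ∘ₗ projU) ∘ₗ LinearMap.fst F (Fin m → F) (Fin (md i) → F)
            + M ∘ₗ LinearMap.snd F (Fin m → F) (Fin (md i) → F) with hΛ
        set Ψ : ((Fin m → F) × (Fin (md i) → F)) →ᵃ[F] (Fin n → F) :=
          { toFun := fun p =>
              (w : Fin n → F) + C.subtype (e.symm (ψ p.2)) + L (projU (p.1 - b0)),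
            linear := Λ,
            map_vadd' := by
              rintro ⟨p1, p2⟩ ⟨v1, v2⟩
              have hψv : ψ (v2 +ᵥ p2) = ψ.linear v2 +ᵥ ψ p2 := ψ.map_vadd p2 v2
              rw [vadd_eq_add] at hψv
              show (w : Fin n → F) + C.subtype (e.symm (ψ (v2 + p2)))
                  + L (projU (v1 + p1 - b0)) = _
              rw [hψv]
              have hpu : projU (v1 + p1 - b0) = projU v1 + projU (p1 - b0) := by
                rw [show v1 + p1 - b0 = v1 + (p1 - b0) by abel, map_add]
              rw [hpu, vadd_eq_add]
              show _ = L (projU v1) + M v2 + _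
              have hMv : M v2 = C.subtype (e.symm (ψ.linear v2)) := rfl
              rw [hMv]
              simp only [map_add]
              abel } with hΨ
        set g : ↥(B ×ˢ Fam i) → (Fin n → F) := fun x => Ψ x.1 with hg
        have hgmem : g ∈ affHomSet F (B ×ˢ Fam i) A0 := by
          refine ⟨⟨Ψ, fun x => rfl⟩, ?_⟩
          rintro ⟨⟨b, y⟩, hb, hy⟩
          have hu : b - b0 ∈ U := by rw [← vsub_eq_sub]; exact vsub_mem_vectorSpan F hb hb0
          have hT : (w : Fin n → F) + (e.symm (ψ y) : Fin n → F) ∈ T := by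
            have h7 : ψ y = f ⟨y, hy⟩ := (hψ ⟨y, hy⟩).symm
            rw [h7]; exact hfval ⟨y, hy⟩
          have h8 := hT b hb hu
          show (w : Fin n → F) + C.subtype (e.symm (ψ y)) + L (projU (b - b0)) ∈ A0
          have h9 : projU (b - b0) = ⟨b - b0, hu⟩ :=
            Submodule.linearProjOfIsCompl_apply_left hU' ⟨b - b0, hu⟩
          rw [h9]
          exact h8
        have hgnd : IsNondegen F (B ×ˢ Fam i) g := by
          rcases (Fam i).eq_empty_or_nonempty with hFe | hFne
          · have hempty : (B ×ˢ Fam i) = (∅ : Set ((Fin m → F) × (Fin (md i) → F))) := by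
              simp [hFe]
            unfold IsNondegen
            have hre : Set.range g = (∅ : Set (Fin n → F)) := by
              rw [Set.range_eq_empty_iff]
              exact Set.isEmpty_coe_sort.2 hempty
            have e1 : affRank F (Set.range g) = 1 := by
              rw [hre]; unfold affRank; simp
            have e2 : affRank F (B ×ˢ Fam i) = 1 := by
              rw [hempty]; unfold affRank; simp
            rw [e1, e2]
          · obtain ⟨y0, hy0⟩ := hFne
            set Y : Submodule F (Fin (md i) → F) := vectorSpan F (Fam i) with hYdef
            have hprod : vectorSpan F (B ×ˢ Fam i) = U.prod Y := by
              rw [vectorSpan_prod' ⟨b0, hb0⟩ ⟨y0, hy0⟩, ← hUdef]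
            have hrangef : Set.range f = ψ '' (Fam i) := by
              ext v; constructor
              · rintro ⟨x, rfl⟩; exact ⟨x.1, x.2, (hψ x).symm⟩
              · rintro ⟨y, hy, rfl⟩; exact ⟨⟨y, hy⟩, hψ ⟨y, hy⟩⟩
            have hfk : finrank F (Y.map ψ.linear) = finrank F Y := by
              have h10 := hnd
              unfold IsNondegen affRank at h10
              rw [direction_affineSpan, direction_affineSpan, hrangef, vectorSpan_image,
                ← hYdef] at h10
              omega
            have hrangeg : Set.range g = Ψ '' (B ×ˢ Fam i) := by
              rw [hg]
              exact (Set.image_eq_range Ψ (B ×ˢ Fam i)).symm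
            have hVg : vectorSpan F (Set.range g) = W ⊔ Y.map M := by
              rw [hrangeg, vectorSpan_image, hprod]
              apply le_antisymm
              · rintro x hx
                rw [Submodule.mem_map] at hx
                obtain ⟨⟨u, v⟩, ⟨hu, hv⟩, rfl⟩ := hx
                have h11 : Ψ.linear (u, v) = L (projU u) + M v := rfl
                rw [h11]
                exact Submodule.add_mem_sup (LinearMap.mem_range_self L _)
                  (Submodule.mem_map_of_mem hv)
              · refine sup_le ?_ ?_
                · rintro x ⟨u, rfl⟩
                  refine ⟨((u : Fin m → F), 0), ⟨u.2, Y.zero_mem⟩, ?_⟩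
                  show L (projU u) + M 0 = L u
                  rw [show projU u = u from Submodule.linearProjOfIsCompl_apply_left hU' u, map_zero, add_zero]
                · rintro x ⟨v, hv, rfl⟩
                  refine ⟨(0, v), ⟨U.zero_mem, hv⟩, ?_⟩
                  show L (projU 0) + M v = M v
                  rw [map_zero, map_zero, zero_add]
            have hMY : finrank F (Y.map M) = finrank F Y := by
              rw [hM, Submodule.map_comp, Submodule.map_comp,
                Submodule.finrank_map_subtype_eq]
              have h14 : finrank F ((Y.map ψ.linear).map e.symm.toLinearMap)
                  = finrank F (Y.map ψ.linear) := LinearEquiv.finrank_map_eq e.symm _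
              rw [h14, hfk]
            have hMYC : Y.map M ≤ C := by
              rintro x hx
              rw [Submodule.mem_map] at hx
              obtain ⟨v, hv, rfl⟩ := hx
              exact (e.symm (ψ.linear v)).2
            have hdisj : W ⊓ Y.map M = ⊥ := by
              have hle : W ⊓ Y.map M ≤ ⊥ := by
                calc W ⊓ Y.map M ≤ W ⊓ C := inf_le_inf_left W hMYC
                  _ = ⊥ := disjoint_iff.mp hWC.disjoint
              exact le_bot_iff.mp hle
            have hsum := Submodule.finrank_sup_add_finrank_inf_eq W (Y.map M)
            rw [hdisj, finrank_bot] at hsum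
            unfold IsNondegen affRank
            rw [direction_affineSpan, direction_affineSpan, hVg, hprod,
              finrank_submodule_prod]
            omega
        exact hA0 i g hgmem hgnd
      refine le_trans
        (Set.ncard_le_ncard_of_injOn (fun t => e (projC t)) ?_ ?_ (Set.toFinite Sw)) hSwE
      · rintro t ⟨htT, htw⟩
        show (w : Fin n → F) + (e.symm (e (projC t)) : Fin n → F) ∈ T
        rw [LinearEquiv.symm_apply_apply, ← htw,
          (show ((W.linearProjOfIsCompl C hWC t : Fin n → F) + (C.linearProjOfIsCompl W hWC.symm t : Fin n → F)) = t from Submodule.projection_add_projection_eq_self hWC t)]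
        exact htT
      · rintro t ⟨htT, htw⟩ t' ⟨htT', htw'⟩ hee
        have h6 : projC t = projC t' := e.injective hee
        rw [← (show ((W.linearProjOfIsCompl C hWC t : Fin n → F) + (C.linearProjOfIsCompl W hWC.symm t : Fin n → F)) = t from Submodule.projection_add_projection_eq_self hWC t),
          ← (show ((W.linearProjOfIsCompl C hWC t' : Fin n → F) + (C.linearProjOfIsCompl W hWC.symm t' : Fin n → F)) = t' from Submodule.projection_add_projection_eq_self hWC t')]
        rw [hprojW] at htw htw'
        rw [hprojC] at h6
        rw [htw, htw', h6]
    have h2 : T.ncard ≤ q ^ (r - 1) * E := by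
      have hcW : Nat.card W = q ^ (r - 1) := by
        obtain ⟨eW⟩ := FiniteDimensional.nonempty_linearEquiv_of_finrank_eq
          (hWrank.trans (Module.finrank_fin_fun F).symm)
        rw [Nat.card_congr eW.toEquiv]
        simp [Nat.card_eq_fintype_card, Fintype.card_fun]
        rfl
      have h13 := fiber_count (Set.toFinite T) (fun t => projW t) E hslice
      rwa [hcW] at h13
    exact le_trans h1 h2
  have hfr : finrank F U = r - 1 := by omega
  let β : Basis (Fin (r - 1)) F U := (Module.finBasis F U).reindex (finCongr hfr)
  haveI : Finite (U →ₗ[F] (Fin n → F)) :=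
    Finite.of_equiv _ (β.constr (M' := Fin n → F) F).toEquiv
  have hcount := fiber_count (Set.toFinite H) Lof (q ^ (r - 1) * E) hfiber
  have hcardL : Nat.card (U →ₗ[F] (Fin n → F)) = (q ^ n) ^ (r - 1) := by
    have h4 := Nat.card_congr (β.constr (M' := Fin n → F) F).toEquiv.symm
    rw [h4]
    simp [Nat.card_eq_fintype_card, Fintype.card_fun]
    rfl
  calc H.ncard ≤ Nat.card (U →ₗ[F] (Fin n → F)) * (q ^ (r - 1) * E) := hcount
    _ = q ^ (r - 1) * (q ^ n) ^ (r - 1) * E := by rw [hcardL]; ring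

theorem stmt_18 (F : Type*) [Field F] [Fintype F] {ι : Type*} (md : ι → ℕ)
    (m : ℕ) (B : Set (Fin m → F)) (Fam : ∀ i, Set (Fin (md i) → F))
    (r : ℕ) (hB : B.Nonempty) (hr : affRank F B = r) (hr1 : 1 ≤ r)
    (n : ℕ) (hn : r ≤ n) (α : ℝ)
    (hα : (exAffFam F n (fun i => B ×ˢ Fam i) : ℝ) =
      α * (Fintype.card F : ℝ) ^ n) :
    sInf {k : ℕ | ∃ A : Set (Fin n → F),
        (A.ncard : ℝ) = α * (Fintype.card F : ℝ) ^ n ∧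
        k = ({f ∈ affHomSet F B A | IsNondegen F B f}).ncard} ≤
      Fintype.card F ^ (r - 1) * (Fintype.card F ^ n) ^ (r - 1) *
        exAffFam F (n - r + 1) Fam := by
  classical
  set S := {k : ℕ | ∃ A : Set (Fin n → F), A.ncard = k ∧
    ∀ i, ∀ f ∈ affHomSet F (B ×ˢ Fam i) A, ¬ IsNondegen F (B ×ˢ Fam i) f} with hS
  have hex : exAffFam F n (fun i => B ×ˢ Fam i) = sSup S := rfl
  rcases S.eq_empty_or_nonempty with hSe | hSne
  · have h0 : exAffFam F n (fun i => B ×ˢ Fam i) = 0 := by rw [hex, hSe]; exact csSup_empty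
    rw [h0] at hα
    have hmem : (0 : ℕ) ∈ {k : ℕ | ∃ A : Set (Fin n → F),
        (A.ncard : ℝ) = α * (Fintype.card F : ℝ) ^ n ∧
        k = ({f ∈ affHomSet F B A | IsNondegen F B f}).ncard} := by
      refine ⟨∅, by simpa using hα, ?_⟩
      have hempty : {f ∈ affHomSet F B (∅ : Set (Fin n → F)) | IsNondegen F B f} = ∅ := by
        ext f
        simp only [Set.mem_setOf_eq, Set.mem_empty_iff_false, iff_false]
        rintro ⟨⟨-, hval⟩, -⟩
        obtain ⟨b, hb⟩ := hB
        exact hval ⟨b, hb⟩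
      rw [hempty, Set.ncard_empty]
    exact le_trans (Nat.sInf_le hmem) (Nat.zero_le _)
  · have hbdd : BddAbove S := by
      refine ⟨Fintype.card (Fin n → F), ?_⟩
      rintro k ⟨A, rfl, -⟩
      exact le_trans (Set.ncard_le_ncard (Set.subset_univ A) Set.finite_univ)
        (le_of_eq (by rw [Set.ncard_univ, Nat.card_eq_fintype_card]))
    have hmem := Nat.sSup_mem hSne hbdd
    rw [← hex] at hmem
    obtain ⟨A0, hA0card, hA0⟩ := hmem
    refine le_trans (Nat.sInf_le ⟨A0, ?_, rfl⟩) (key_count hB hr hr1 hn A0 hA0)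
    rw [hA0card]
    exact hα
end

section
/- For q ∈ {2,3} with σ₂ = 2 and σ₃ = C₀, assume 𝔽_q^1 is σ_q-weakly Sidorenko. Then for every t ≥ 0 and every n, ex_aff(n, 𝔽_q^t) < q^{n − (n−t)/(σ_q^t − t)}; that is, every subset of 𝔽_q^n of size at least q^{n − (n−t)/(σ_q^t − t)} contains an affine t-dimensional subspace. -/
open Pointwise

set_option linter.unusedSectionVars false
namespace Stmt19

variable {F : Type*} [Field F] [Fintype F]

def shiftSet {n : ℕ} (A : Set (Fin n → F)) (d : Fin n → F) : Set (Fin n → F) :=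
  {w | ∀ y : F, w + y • d ∈ A}

def Spt (t : ℕ) {n : ℕ} (A : Set (Fin n → F)) : Set ((Fin n → F) × (Fin t → Fin n → F)) :=
  {p | ∀ x : Fin t → F, (p.1 + ∑ j, x j • p.2 j) ∈ A}

def lineSet {n : ℕ} (A : Set (Fin n → F)) : Set ((Fin n → F) × (Fin n → F)) :=
  {p | ∀ y : F, p.1 + y • p.2 ∈ A}

-- line parameterization
def eL {n : ℕ} (p : (Fin n → F) × (Fin n → F)) : ↥(Set.univ : Set F) → (Fin n → F) :=
  fun y => p.1 + (y : F) • p.2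

lemma eL_injective {n : ℕ} : Function.Injective (eL (F := F) (n := n)) := by
  intro p p' h
  have h0 := congrFun h ⟨0, trivial⟩
  simp only [eL] at h0
  have hb : p.1 = p'.1 := by simpa using h0
  have h1 := congrFun h ⟨1, trivial⟩
  simp only [eL, one_smul] at h1
  rw [hb] at h1
  exact Prod.ext hb (add_left_cancel h1)

lemma affHomSet_line_eq_image {n : ℕ} (A : Set (Fin n → F)) :
    affHomSet F (Set.univ : Set F) A = eL '' (lineSet A) := by
  ext f
  constructor
  · rintro ⟨⟨φ, hφ⟩, hA⟩
    have key : ∀ y : F, φ 0 + y • φ.linear 1 = φ y := by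
      intro y
      have h2 : φ.linear y = y • φ.linear 1 := by
        conv_lhs => rw [show y = y • (1 : F) by simp]
        rw [map_smul]
      have h1 : φ y = φ.linear y + φ 0 := by
        conv_lhs => rw [AffineMap.decomp]
        rfl
      rw [h1, h2]; abel
    refine ⟨(φ 0, φ.linear 1), ?_, ?_⟩
    · intro y
      rw [key y]
      have := hA ⟨y, trivial⟩
      rwa [hφ ⟨y, trivial⟩] at this
    · funext y
      rw [eL, key (y : F), hφ y]
  · rintro ⟨p, hp, rfl⟩
    refine ⟨⟨⟨fun y => p.1 + y • p.2, LinearMap.toSpanSingleton F _ p.2, ?_⟩, fun y => rfl⟩,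
      fun y => hp y⟩
    intro q v
    simp only [vadd_eq_add, LinearMap.toSpanSingleton_apply, add_smul]
    abel

lemma card_affHomSet_line {n : ℕ} (A : Set (Fin n → F)) :
    (affHomSet F (Set.univ : Set F) A).ncard = (lineSet A).ncard := by
  rw [affHomSet_line_eq_image, Set.ncard_image_of_injective _ eL_injective]

-- generic fiber decomposition
lemma ncard_fiber_sum {β γ : Type*} [Fintype β] [Fintype γ] [DecidableEq γ]
    (s : Set β) (g : β → γ) : s.ncard = ∑ c : γ, {x | x ∈ s ∧ g x = c}.ncard := by
  classical
  have h1 : s.ncard = s.toFinite.toFinset.card := Set.ncard_eq_toFinset_card s s.toFinite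
  rw [h1, Finset.card_eq_sum_card_fiberwise (f := g) (t := Finset.univ)
    (fun x _ => Finset.mem_univ _)]
  refine Finset.sum_congr rfl fun c _ => ?_
  have h2 : ({x | x ∈ s ∧ g x = c} : Set β).toFinite.toFinset
      = s.toFinite.toFinset.filter (fun x => g x = c) := by
    ext x
    simp only [Set.Finite.mem_toFinset, Set.mem_setOf_eq, Finset.mem_filter]
  rw [Set.ncard_eq_toFinset_card _ (Set.toFinite _), h2]

lemma card_lineSet_sum {n : ℕ} (A : Set (Fin n → F)) :
    (lineSet A).ncard = ∑ d : Fin n → F, (shiftSet A d).ncard := by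
  classical
  rw [ncard_fiber_sum (lineSet A) Prod.snd]
  refine Finset.sum_congr rfl fun d _ => ?_
  have himg : {x | x ∈ lineSet A ∧ x.2 = d} = (fun w => (w, d)) '' shiftSet A d := by
    ext ⟨b, e⟩
    simp only [Set.mem_setOf_eq, Set.mem_image, lineSet, shiftSet, Prod.mk.injEq]
    constructor
    · rintro ⟨h, rfl⟩; exact ⟨b, h, rfl, rfl⟩
    · rintro ⟨w, hw, rfl, rfl⟩; exact ⟨hw, rfl⟩
  rw [himg, Set.ncard_image_of_injective _ (fun a b h => by simpa using congrArg Prod.fst h)]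

lemma sum_snoc_smul {t n : ℕ} (v : Fin (t+1) → Fin n → F) (x' : Fin t → F) (y : F) :
    ∑ j, (Fin.snoc x' y : Fin (t+1) → F) j • v j
      = (∑ j, x' j • v (Fin.castSucc j)) + y • v (Fin.last t) := by
  rw [Fin.sum_univ_castSucc]
  simp

lemma sum_smul_snoc {t n : ℕ} (v' : Fin t → Fin n → F) (d : Fin n → F) (x : Fin (t+1) → F) :
    ∑ j, x j • (Fin.snoc v' d : Fin t.succ → Fin n → F) j
      = (∑ j, x (Fin.castSucc j) • v' j) + x (Fin.last t) • d := by
  rw [Fin.sum_univ_castSucc]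
  simp

lemma card_Spt_succ {t n : ℕ} (A : Set (Fin n → F)) :
    (Spt (t+1) A).ncard = ∑ d : Fin n → F, (Spt t (shiftSet A d)).ncard := by
  classical
  rw [ncard_fiber_sum (Spt (t+1) A) (fun p => p.2 (Fin.last t))]
  refine Finset.sum_congr rfl fun d _ => ?_
  have himg : {p | p ∈ Spt (t+1) A ∧ p.2 (Fin.last t) = d}
      = (fun p' : (Fin n → F) × (Fin t → Fin n → F) => (p'.1, Fin.snoc p'.2 d)) ''
          Spt t (shiftSet A d) := by
    ext ⟨b, v⟩
    simp only [Set.mem_setOf_eq, Set.mem_image, Spt, Prod.mk.injEq]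
    constructor
    · rintro ⟨h, hlast⟩
      refine ⟨(b, Fin.init v), ?_, rfl, ?_⟩
      · intro x' y
        have := h (Fin.snoc x' y)
        rw [sum_snoc_smul] at this
        have hinit : ∀ j : Fin t, Fin.init v j = v (Fin.castSucc j) := fun j => rfl
        simp only [hinit]
        rw [add_assoc, ← hlast]
        exact this
      · simp only
        rw [← hlast]
        exact Fin.snoc_init_self v
    · rintro ⟨⟨b', v'⟩, hp', heq, hv⟩
      subst heq
      constructor
      · intro x
        rw [← hv, sum_smul_snoc, ← add_assoc]
        exact hp' (fun j => x (Fin.castSucc j)) (x (Fin.last t))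
      · rw [← hv]; simp
  rw [himg]
  refine Set.ncard_image_of_injective _ ?_
  intro a b h
  have h1 := congrArg Prod.fst h
  have h2 := congrArg Prod.snd h
  simp only at h1 h2
  have h3 : a.2 = b.2 := by
    have := congrArg Fin.init h2
    rwa [Fin.init_snoc, Fin.init_snoc] at this
  exact Prod.ext h1 h3

lemma card_Spt_zero {n : ℕ} (A : Set (Fin n → F)) : (Spt 0 A).ncard = A.ncard := by
  have himg : Spt 0 A = (fun b => (b, (fun j => j.elim0 : Fin 0 → Fin n → F))) '' A := by
    ext ⟨b, v⟩
    simp only [Spt, Set.mem_setOf_eq, Set.mem_image, Prod.mk.injEq]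
    constructor
    · intro h
      have hb : b ∈ A := by simpa using h (fun j => j.elim0)
      exact ⟨b, hb, rfl, by funext j; exact j.elim0⟩
    · rintro ⟨w, hw, rfl, rfl⟩
      intro x
      simpa using hw
  rw [himg, Set.ncard_image_of_injective _ (fun a b h => by simpa using congrArg Prod.fst h)]

def eM {t n : ℕ} (p : (Fin n → F) × (Fin t → Fin n → F)) :
    ↥(Set.univ : Set (Fin t → F)) → (Fin n → F) :=
  fun x => p.1 + ∑ j, (x : Fin t → F) j • p.2 j

lemma eM_injective {t n : ℕ} : Function.Injective (eM (F := F) (t := t) (n := n)) := by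
  intro p p' h
  have h0 := congrFun h ⟨0, trivial⟩
  simp only [eM] at h0
  have hb : p.1 = p'.1 := by simpa using h0
  have hv : p.2 = p'.2 := by
    funext j
    have hj := congrFun h ⟨Pi.single j 1, trivial⟩
    simp only [eM, Pi.single_apply, ite_smul, one_smul, zero_smul,
      Finset.sum_ite_eq', Finset.mem_univ, if_true] at hj
    rw [hb] at hj
    exact add_left_cancel hj
  exact Prod.ext hb hv

/-- the linear map given by coefficients `v`. -/
def ℓM {t n : ℕ} (v : Fin t → Fin n → F) : (Fin t → F) →ₗ[F] (Fin n → F) where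
  toFun x := ∑ j, x j • v j
  map_add' x y := by simp [add_smul, Finset.sum_add_distrib]
  map_smul' c x := by simp [smul_smul, Finset.smul_sum]

lemma eM_mem_affHomSet {t n : ℕ} {A : Set (Fin n → F)} {p} (hp : p ∈ Spt t A) :
    eM p ∈ affHomSet F (Set.univ : Set (Fin t → F)) A := by
  refine ⟨⟨⟨fun x => p.1 + ℓM p.2 x, ℓM p.2, ?_⟩, fun x => rfl⟩, fun x => hp x⟩
  intro q v
  simp only [vadd_eq_add, map_add]
  abel

lemma affHomSet_eq_image {t n : ℕ} (A : Set (Fin n → F)) :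
    affHomSet F (Set.univ : Set (Fin t → F)) A = eM '' (Spt t A) := by
  ext f
  constructor
  · rintro ⟨⟨φ, hφ⟩, hA⟩
    refine ⟨(φ 0, fun j => φ.linear (Pi.single j 1)), ?_, ?_⟩
    · intro x
      have key : φ 0 + ∑ j, x j • φ.linear (Pi.single j 1) = φ x := by
        have h2 : φ.linear x = ∑ j, x j • φ.linear (Pi.single j 1) := by
          rw [LinearMap.pi_apply_eq_sum_univ]
          refine Finset.sum_congr rfl fun i _ => ?_
          have hs : (fun j => if i = j then (1:F) else 0) = Pi.single i 1 := by
            funext j; simp [Pi.single_apply, eq_comm]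
          rw [hs]
        have h1 : φ x = φ.linear x + φ 0 := by
          conv_lhs => rw [AffineMap.decomp]
          rfl
        rw [h1, h2]; abel
      rw [key]
      have := hA ⟨x, trivial⟩
      rwa [hφ ⟨x, trivial⟩] at this
    · funext x
      have key : φ 0 + ∑ j, (x : Fin t → F) j • φ.linear (Pi.single j 1) = φ x := by
        have h2 : φ.linear (x : Fin t → F) = ∑ j, (x : Fin t → F) j • φ.linear (Pi.single j 1) := by
          rw [LinearMap.pi_apply_eq_sum_univ]
          refine Finset.sum_congr rfl fun i _ => ?_
          have hs : (fun j => if i = j then (1:F) else 0) = Pi.single i 1 := by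
            funext j; simp [Pi.single_apply, eq_comm]
          rw [hs]
        have h1 : φ (x : Fin t → F) = φ.linear (x : Fin t → F) + φ 0 := by
          conv_lhs => rw [AffineMap.decomp]
          rfl
        rw [h1, h2]; abel
      rw [eM, key, hφ x]
  · rintro ⟨p, hp, rfl⟩
    exact eM_mem_affHomSet hp

lemma card_affHomSet_pi (t n : ℕ) (A : Set (Fin n → F)) :
    (affHomSet F (Set.univ : Set (Fin t → F)) A).ncard = (Spt t A).ncard := by
  rw [affHomSet_eq_image, Set.ncard_image_of_injective _ eM_injective]


end Stmt19

section Part3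
namespace Stmt19
variable {F : Type*} [Field F] [Fintype F]

lemma affRank_univ (V : Type*) [AddCommGroup V] [Module F V] :
    affRank F (Set.univ : Set V) = Module.finrank F V + 1 := by
  rw [affRank, AffineSubspace.span_univ, AffineSubspace.direction_top]
  rw [finrank_top]

lemma affRank_univ_pi (t : ℕ) :
    affRank F (Set.univ : Set (Fin t → F)) = t + 1 := by
  rw [affRank_univ, Module.finrank_fintype_fun_eq_card, Fintype.card_fin]

lemma affRank_univ_F : affRank F (Set.univ : Set F) = 2 := by
  rw [affRank_univ, Module.finrank_self]

def eM' {t n : ℕ} (p : (Fin n → F) × (Fin t → Fin n → F)) :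
    ↥(Set.univ : Set (Fin t → F)) → (Fin n → F) :=
  fun x => p.1 + ∑ j, (x : Fin t → F) j • p.2 j

lemma range_eM' {t n : ℕ} (p : (Fin n → F) × (Fin t → Fin n → F)) :
    Set.range (eM' p) = (fun u => p.1 + u) '' (Submodule.span F (Set.range p.2) : Set (Fin n → F)) := by
  ext w
  simp only [Set.mem_range, Set.mem_image, SetLike.mem_coe, eM']
  constructor
  · rintro ⟨x, rfl⟩
    refine ⟨∑ j, (x : Fin t → F) j • p.2 j, ?_, rfl⟩
    exact Submodule.sum_mem _ fun j _ =>
      Submodule.smul_mem _ _ (Submodule.subset_span (Set.mem_range_self j))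
  · rintro ⟨u, hu, rfl⟩
    obtain ⟨c, hc⟩ := (Submodule.mem_span_range_iff_exists_fun (R := F)).1 hu
    exact ⟨⟨c, trivial⟩, by rw [hc]⟩

lemma affRank_range_eM' {t n : ℕ} (p : (Fin n → F) × (Fin t → Fin n → F)) :
    affRank F (Set.range (eM' p))
      = Module.finrank F (Submodule.span F (Set.range p.2)) + 1 := by
  set U := Submodule.span F (Set.range p.2)
  have hset : Set.range (eM' p) = (AffineSubspace.mk' p.1 U : Set (Fin n → F)) := by
    rw [range_eM']
    ext w
    simp only [Set.mem_image, SetLike.mem_coe]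
    rw [AffineSubspace.mem_mk']
    constructor
    · rintro ⟨u, hu, rfl⟩
      simpa using hu
    · intro h
      exact ⟨w - p.1, h, by abel⟩
  rw [affRank, hset, AffineSubspace.affineSpan_coe, AffineSubspace.direction_mk']

lemma exists_dep_of_degenerate {t n : ℕ} {A : Set (Fin n → F)}
    (hA : ∀ f ∈ affHomSet F (Set.univ : Set (Fin t → F)) A,
      ¬ IsNondegen F (Set.univ : Set (Fin t → F)) f) :
    ∀ p ∈ Spt t A, ∃ k : Fin t → F, (∑ j, k j • p.2 j = 0) ∧ k ≠ 0 := by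
  intro p hp
  have hmem : eM p ∈ affHomSet F (Set.univ : Set (Fin t → F)) A := eM_mem_affHomSet hp
  have hnd := hA _ hmem
  rw [IsNondegen, affRank_univ_pi] at hnd
  have heM : eM (F := F) p = eM' p := rfl
  rw [heM, affRank_range_eM'] at hnd
  have hnli : ¬ LinearIndependent F p.2 := by
    intro hli
    exact hnd (by rw [finrank_span_eq_card hli, Fintype.card_fin])
  obtain ⟨g, hg, i, hi⟩ := Fintype.not_linearIndependent_iff.1 hnli
  exact ⟨g, hg, fun h => hi (by rw [h]; rfl)⟩

end Stmt19
end Part3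

section Part4
namespace Stmt19
variable {F : Type*} [Field F] [Fintype F]

lemma mem0_of_Spt {t n : ℕ} {A : Set (Fin n → F)} {p} (hp : p ∈ Spt t A) : p.1 ∈ A := by
  simpa using hp (fun _ => 0)

lemma memj_of_Spt {t n : ℕ} {A : Set (Fin n → F)} {p} (hp : p ∈ Spt t A) (j : Fin t) :
    p.1 + p.2 j ∈ A := by
  have := hp (Pi.single j 1)
  simpa [Pi.single_apply, ite_smul] using this

lemma degenerate_card {t n : ℕ} (A : Set (Fin n → F))
    (h : ∀ p ∈ Spt t A, ∃ k : Fin t → F, (∑ j, k j • p.2 j = 0) ∧ k ≠ 0) :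
    (Spt t A).ncard ≤ (Fintype.card F ^ t - 1) * A.ncard ^ t := by
  classical
  set K : ↥(Spt t A) → {k : Fin t → F // k ≠ 0} :=
    fun p => ⟨Classical.choose (h p.1 p.2), (Classical.choose_spec (h p.1 p.2)).2⟩ with hK
  have hKsum : ∀ p : ↥(Spt t A), ∑ j, (K p).1 j • p.1.2 j = 0 :=
    fun p => (Classical.choose_spec (h p.1 p.2)).1
  set idx : {k : Fin t → F // k ≠ 0} → Fin t :=
    fun k : {k : Fin t → F // k ≠ 0} => Classical.choose (Function.ne_iff.1 k.2) with hidxdef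
  have hidx : ∀ k : {k : Fin t → F // k ≠ 0}, k.1 (idx k) ≠ 0 := by
    intro k
    have := Classical.choose_spec (Function.ne_iff.1 k.2)
    simpa using this
  set Ψ : ↥(Spt t A) → ({k : Fin t → F // k ≠ 0} × (Fin t → ↥A)) :=
    fun p => (K p, fun j => ⟨p.1.1 + (if j = idx (K p) then 0 else p.1.2 j), by
      split_ifs with hj
      · simpa using mem0_of_Spt p.2
      · exact memj_of_Spt p.2 j⟩) with hΨ
  have hinj : Function.Injective Ψ := by
    intro p p' heq
    have h1 : K p = K p' := congrArg Prod.fst heq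
    have hidxeq : idx (K p) = idx (K p') := by rw [h1]
    set i := idx (K p) with hi
    have h2 : ∀ j, p.1.1 + (if j = i then 0 else p.1.2 j)
        = p'.1.1 + (if j = i then 0 else p'.1.2 j) := by
      intro j
      have := congrArg Subtype.val (congrFun (congrArg Prod.snd heq) j)
      simpa [hΨ, ← hidxeq] using this
    have hb : p.1.1 = p'.1.1 := by
      have := h2 i
      simpa using this
    have hvne : ∀ j, j ≠ i → p.1.2 j = p'.1.2 j := by
      intro j hj
      have := h2 j
      rw [if_neg hj, if_neg hj, hb] at this
      exact add_left_cancel this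
    have hvi : p.1.2 i = p'.1.2 i := by
      have e1 : (K p).1 i • p.1.2 i + ∑ j ∈ Finset.univ.erase i, (K p).1 j • p.1.2 j = 0 := by
        rw [Finset.add_sum_erase Finset.univ (fun j => (K p).1 j • p.1.2 j) (Finset.mem_univ i)]
        exact hKsum p
      have e2 : (K p).1 i • p'.1.2 i + ∑ j ∈ Finset.univ.erase i, (K p).1 j • p'.1.2 j = 0 := by
        rw [Finset.add_sum_erase Finset.univ (fun j => (K p).1 j • p'.1.2 j) (Finset.mem_univ i)]
        have := hKsum p'
        rw [← h1] at this
        exact this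
      have esum : ∑ j ∈ Finset.univ.erase i, (K p).1 j • p.1.2 j
          = ∑ j ∈ Finset.univ.erase i, (K p).1 j • p'.1.2 j := by
        refine Finset.sum_congr rfl fun j hj => ?_
        rw [hvne j (Finset.mem_erase.1 hj).1]
      rw [esum] at e1
      have heq2 : (K p).1 i • p.1.2 i = (K p).1 i • p'.1.2 i :=
        add_right_cancel (e1.trans e2.symm)
      exact smul_right_injective _ (hidx (K p)) heq2
    have hv : p.1.2 = p'.1.2 := by
      funext j
      by_cases hj : j = i
      · rw [hj]; exact hvi
      · exact hvne j hj
    exact Subtype.ext (Prod.ext hb hv)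
  have hcard := Nat.card_le_card_of_injective Ψ hinj
  rw [Nat.card_coe_set_eq] at hcard
  calc (Spt t A).ncard ≤ Nat.card ({k : Fin t → F // k ≠ 0} × (Fin t → ↥A)) := hcard
    _ = (Fintype.card F ^ t - 1) * A.ncard ^ t := by
        rw [Nat.card_prod, Nat.card_fun]
        congr 1
        · rw [Nat.card_eq_fintype_card]
          have : Fintype.card {k : Fin t → F // k ≠ 0}
              = Fintype.card (Fin t → F) - Fintype.card {k : Fin t → F // k = 0} :=
            Fintype.card_subtype_compl _
          rw [this, Fintype.card_subtype_eq, Fintype.card_fun, Fintype.card_fin]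
        · rw [Nat.card_coe_set_eq, Nat.card_eq_fintype_card, Fintype.card_fin]

end Stmt19
end Part4


section Part5
namespace Stmt19
variable {F : Type*} [Field F] [Fintype F]

lemma two_le_sigma (σ : ℝ) (hσ : WeaklySidorenko F (Set.univ : Set F) σ) : 2 ≤ σ := by
  classical
  have hq1 : (1:ℝ) < (Fintype.card F : ℝ) := by exact_mod_cast Fintype.one_lt_card
  have hq0 : (0:ℝ) < (Fintype.card F : ℝ) := by linarith
  set A : Set (Fin 1 → F) := {0} with hA
  have hline : lineSet A = {((0 : Fin 1 → F), (0 : Fin 1 → F))} := by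
    ext ⟨b, d⟩
    simp only [lineSet, Set.mem_setOf_eq, Set.mem_singleton_iff, Prod.mk.injEq, hA]
    constructor
    · intro h
      have hb : b = 0 := by simpa using h 0
      have hd : d = 0 := by
        have h1 := h 1
        rwa [one_smul, hb, zero_add] at h1
      exact ⟨hb, hd⟩
    · rintro ⟨rfl, rfl⟩
      intro y
      simp
  have hcard : ((affHomSet F (Set.univ : Set F) A).ncard : ℝ) = 1 := by
    rw [card_affHomSet_line, hline, Set.ncard_singleton, Nat.cast_one]
  have hAcard : ((A.ncard : ℕ) : ℝ) = (Fintype.card F : ℝ)⁻¹ * (Fintype.card F : ℝ) ^ (1:ℕ) := by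
    rw [hA, Set.ncard_singleton, Nat.cast_one]
    field_simp
  have hws := hσ 1 A (Fintype.card F : ℝ)⁻¹ hAcard
  rw [affRank_univ_F, hcard] at hws
  rw [Real.inv_rpow hq0.le, pow_one] at hws
  have hqσ : (0:ℝ) < (Fintype.card F : ℝ) ^ σ := Real.rpow_pos_of_pos hq0 σ
  have h3 := mul_le_mul_of_nonneg_right hws hqσ.le
  rw [one_mul, mul_comm (((Fintype.card F : ℝ) ^ σ)⁻¹) _, mul_assoc,
    inv_mul_cancel₀ hqσ.ne', mul_one] at h3
  have h4 : (Fintype.card F : ℝ) ^ (2:ℝ) ≤ (Fintype.card F : ℝ) ^ σ := by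
    rw [show (2:ℝ) = ((2:ℕ):ℝ) by norm_num, Real.rpow_natCast]
    exact h3
  exact (Real.rpow_le_rpow_left_iff hq1).1 h4

lemma main_lb (σ : ℝ) (hσ2 : 2 ≤ σ) (hσ : WeaklySidorenko F (Set.univ : Set F) σ) :
    ∀ (t n : ℕ) (A : Set (Fin n → F)),
      ((A.ncard : ℝ) / (Fintype.card F : ℝ) ^ n) ^ (σ ^ t) * ((Fintype.card F : ℝ) ^ n) ^ (t + 1)
        ≤ ((Spt t A).ncard : ℝ) := by
  have hq0 : (0:ℝ) < (Fintype.card F : ℝ) := by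
    have := Fintype.card_pos (α := F); exact_mod_cast this
  intro t
  induction t with
  | zero =>
    intro n A
    have hN0 : (0:ℝ) < (Fintype.card F : ℝ) ^ n := pow_pos hq0 n
    rw [pow_zero, Real.rpow_one, card_Spt_zero, zero_add, pow_one, div_mul_cancel₀ _ hN0.ne']
  | succ t ih =>
    intro n A
    set q : ℝ := (Fintype.card F : ℝ) with hqdef
    set N : ℝ := q ^ n with hNdef
    have hN0 : (0:ℝ) < N := pow_pos hq0 n
    set α : ℝ := (A.ncard : ℝ) / N with hα
    have hα0 : (0:ℝ) ≤ α := by positivity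
    have hcardfun : (Fintype.card (Fin n → F) : ℝ) = N := by
      rw [Fintype.card_fun, Fintype.card_fin]
      push_cast
      rfl
    have hrec : ((Spt (t+1) A).ncard : ℝ)
        = ∑ d : Fin n → F, ((Spt t (shiftSet A d)).ncard : ℝ) := by
      rw [card_Spt_succ]
      push_cast
      rfl
    have hpt : ∀ d : Fin n → F, (((shiftSet A d).ncard : ℝ) / N) ^ (σ ^ t) * N ^ (t+1)
        ≤ ((Spt t (shiftSet A d)).ncard : ℝ) := fun d => ih n (shiftSet A d)
    have hsum_lb : α ^ σ * N ≤ ∑ d : Fin n → F, ((shiftSet A d).ncard : ℝ) / N := by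
      have hws := hσ n A α (by rw [hα]; field_simp; rfl)
      rw [affRank_univ_F, card_affHomSet_line, card_lineSet_sum] at hws
      have hc : ((∑ d : Fin n → F, (shiftSet A d).ncard : ℕ) : ℝ)
          = ∑ d : Fin n → F, ((shiftSet A d).ncard : ℝ) := by push_cast; rfl
      rw [hc] at hws
      rw [← Finset.sum_div, le_div_iff₀ hN0]
      calc α ^ σ * N * N = α ^ σ * N ^ 2 := by ring
        _ ≤ ∑ d : Fin n → F, ((shiftSet A d).ncard : ℝ) := hws
    have h1σt : (1:ℝ) ≤ σ ^ t := by
      calc (1:ℝ) = 1 ^ t := (one_pow t).symm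
        _ ≤ σ ^ t := pow_le_pow_left₀ zero_le_one (by linarith) t
    have hjensen : (∑ d : Fin n → F, (1/N) * (((shiftSet A d).ncard : ℝ)/N)) ^ (σ^t)
        ≤ ∑ d : Fin n → F, (1/N) * ((((shiftSet A d).ncard : ℝ)/N) ^ (σ^t)) := by
      apply Real.rpow_arith_mean_le_arith_mean_rpow
      · intro i _; positivity
      · rw [Finset.sum_const, nsmul_eq_mul, Finset.card_univ, hcardfun]
        field_simp
      · intro i _; positivity
      · exact h1σt
    have step1 : ∑ d : Fin n → F, ((((shiftSet A d).ncard : ℝ)/N) ^ (σ^t)) * N^(t+1)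
        ≤ ((Spt (t+1) A).ncard : ℝ) := by
      rw [hrec]
      exact Finset.sum_le_sum fun d _ => hpt d
    have h2 : (α ^ σ) ^ (σ^t) ≤ (∑ d : Fin n → F, (1/N) * (((shiftSet A d).ncard : ℝ)/N)) ^ (σ^t) := by
      apply Real.rpow_le_rpow (Real.rpow_nonneg hα0 σ) ?_ (by positivity)
      rw [← Finset.mul_sum]
      rw [show (1/N) * (∑ d : Fin n → F, ((shiftSet A d).ncard : ℝ)/N)
        = (∑ d : Fin n → F, ((shiftSet A d).ncard : ℝ)/N) / N by ring]
      rw [le_div_iff₀ hN0]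
      exact hsum_lb
    have h1 : N * (α ^ σ) ^ (σ^t) ≤ ∑ d : Fin n → F, (((shiftSet A d).ncard : ℝ)/N) ^ (σ^t) := by
      calc N * (α ^ σ) ^ (σ^t)
          ≤ N * (∑ d : Fin n → F, (1/N) * (((shiftSet A d).ncard : ℝ)/N)) ^ (σ^t) :=
            mul_le_mul_of_nonneg_left h2 hN0.le
        _ ≤ N * (∑ d : Fin n → F, (1/N) * ((((shiftSet A d).ncard : ℝ)/N) ^ (σ^t))) :=
            mul_le_mul_of_nonneg_left hjensen hN0.le
        _ = ∑ d : Fin n → F, (((shiftSet A d).ncard : ℝ)/N) ^ (σ^t) := by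
            rw [← Finset.mul_sum]
            field_simp
    have hexp : (α ^ σ) ^ (σ^t) = α ^ (σ^(t+1)) := by
      rw [← Real.rpow_mul hα0, ← pow_succ']
    calc α ^ (σ^(t+1)) * N ^ (t+1+1)
        = (N * (α ^ σ) ^ (σ^t)) * N^(t+1) := by rw [hexp]; ring
      _ ≤ (∑ d : Fin n → F, (((shiftSet A d).ncard : ℝ)/N) ^ (σ^t)) * N^(t+1) :=
          mul_le_mul_of_nonneg_right h1 (by positivity)
      _ = ∑ d : Fin n → F, ((((shiftSet A d).ncard : ℝ)/N) ^ (σ^t)) * N^(t+1) := by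
          rw [Finset.sum_mul]
      _ ≤ ((Spt (t+1) A).ncard : ℝ) := step1
end Stmt19
end Part5


section Part6
namespace Stmt19
variable {F : Type*} [Field F] [Fintype F]

lemma key_bound (σ : ℝ) (hσ : WeaklySidorenko F (Set.univ : Set F) σ) (t n : ℕ)
    (A : Set (Fin n → F))
    (hdeg : ∀ f ∈ affHomSet F (Set.univ : Set (Fin t → F)) A,
      ¬ IsNondegen F (Set.univ : Set (Fin t → F)) f) :
    (A.ncard : ℝ) < (Fintype.card F : ℝ) ^ ((n : ℝ) - ((n : ℝ) - t) / (σ ^ t - t)) := by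
  classical
  have hσ2 : 2 ≤ σ := two_le_sigma σ hσ
  have hq1 : (1:ℝ) < (Fintype.card F : ℝ) := by exact_mod_cast Fintype.one_lt_card
  have hq0 : (0:ℝ) < (Fintype.card F : ℝ) := lt_trans one_pos hq1
  set q : ℝ := (Fintype.card F : ℝ) with hqdef
  by_contra hcon
  push_neg at hcon
  have h2t : ((t:ℝ)) + 1 ≤ σ ^ t := by
    have h1 : (t + 1 : ℕ) ≤ 2 ^ t := Nat.succ_le_of_lt (Nat.lt_two_pow_self)
    have h1' : ((t:ℝ)) + 1 ≤ (2:ℝ) ^ t := by exact_mod_cast h1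
    have h2 : (2:ℝ) ^ t ≤ σ ^ t := pow_le_pow_left₀ (by norm_num) hσ2 t
    linarith
  have hst : (0:ℝ) < σ ^ t - t := by linarith
  set D : ℝ := ((n:ℝ) - t) / (σ ^ t - t) with hD
  have hDmul : D * (σ ^ t - t) = (n:ℝ) - t := div_mul_cancel₀ _ hst.ne'
  set N : ℝ := q ^ n with hNdef
  have hN0 : (0:ℝ) < N := pow_pos hq0 n
  set α : ℝ := (A.ncard : ℝ) / N with hα
  have hRN : q ^ (-D) * N = q ^ ((n:ℝ) - D) := by
    rw [hNdef, ← Real.rpow_natCast q n, ← Real.rpow_add hq0]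
    congr 1
    ring
  have hαlb : q ^ (-D) ≤ α := by
    rw [hα, le_div_iff₀ hN0, hRN]
    exact hcon
  have hα0 : (0:ℝ) < α := lt_of_lt_of_le (Real.rpow_pos_of_pos hq0 _) hαlb
  have hchain1 : q ^ ((t:ℝ)) ≤ α ^ (σ^t - (t:ℝ)) * N := by
    have h1 : (q ^ (-D)) ^ (σ^t - (t:ℝ)) ≤ α ^ (σ^t - (t:ℝ)) :=
      Real.rpow_le_rpow (Real.rpow_pos_of_pos hq0 _).le hαlb hst.le
    have h2 : (q ^ (-D)) ^ (σ^t - (t:ℝ)) = q ^ ((t:ℝ) - n) := by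
      rw [← Real.rpow_mul hq0.le]
      congr 1
      rw [neg_mul, hDmul]
      ring
    have h3 : q ^ ((t:ℝ) - n) * N = q ^ ((t:ℝ)) := by
      rw [hNdef, ← Real.rpow_natCast q n, ← Real.rpow_add hq0]
      congr 1
      ring
    calc q ^ ((t:ℝ)) = q ^ ((t:ℝ) - n) * N := h3.symm
      _ = (q ^ (-D)) ^ (σ^t - (t:ℝ)) * N := by rw [h2]
      _ ≤ α ^ (σ^t - (t:ℝ)) * N := mul_le_mul_of_nonneg_right h1 hN0.le
  have hdep := exists_dep_of_degenerate hdeg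
  have hub : ((Spt t A).ncard : ℝ) ≤ (q ^ (t:ℕ) - 1) * (A.ncard : ℝ) ^ t := by
    have h1 := degenerate_card A hdep
    have h2 : (1:ℕ) ≤ Fintype.card F ^ t := Nat.one_le_pow _ _ Fintype.card_pos
    calc ((Spt t A).ncard : ℝ) ≤ (((Fintype.card F ^ t - 1) * A.ncard ^ t : ℕ) : ℝ) := by
          exact_mod_cast h1
      _ = (q ^ (t:ℕ) - 1) * (A.ncard : ℝ) ^ t := by
          rw [Nat.cast_mul, Nat.cast_sub h2, Nat.cast_pow, Nat.cast_pow, Nat.cast_one]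
  have hlb := main_lb σ hσ2 hσ t n A
  have hmα : (A.ncard : ℝ) = α * N := by
    rw [hα]
    field_simp
  have hsplit : α ^ (σ^t) = α ^ (σ^t - (t:ℝ)) * α ^ (t:ℕ) := by
    rw [← Real.rpow_natCast α t, ← Real.rpow_add hα0]
    congr 1
    ring
  have hfinal : α ^ (σ^t - (t:ℝ)) * N ≤ q ^ (t:ℕ) - 1 := by
    have h1 : α ^ (σ^t) * N^(t+1) ≤ (q ^ (t:ℕ) - 1) * (α * N)^t := by
      rw [← hmα]
      exact le_trans hlb hub
    rw [hsplit, mul_pow, pow_succ] at h1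
    have hpos : (0:ℝ) < α ^ (t:ℕ) * N ^ (t:ℕ) := by positivity
    have h2 : (α ^ (σ^t - (t:ℝ)) * N) * (α ^ (t:ℕ) * N ^ (t:ℕ))
        ≤ (q ^ (t:ℕ) - 1) * (α ^ (t:ℕ) * N ^ (t:ℕ)) := by
      calc (α ^ (σ^t - (t:ℝ)) * N) * (α ^ (t:ℕ) * N ^ (t:ℕ))
          = (α ^ (σ^t - (t:ℝ)) * α ^ (t:ℕ)) * (N ^ (t:ℕ) * N) := by ring
        _ ≤ (q ^ (t:ℕ) - 1) * (α ^ (t:ℕ) * N ^ (t:ℕ)) := h1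
    exact le_of_mul_le_mul_right h2 hpos
  have habs : q ^ ((t:ℝ)) ≤ q ^ (t:ℕ) - 1 := le_trans hchain1 hfinal
  rw [Real.rpow_natCast] at habs
  linarith

end Stmt19
end Part6

theorem stmt_19 (F : Type*) [Field F] [Fintype F]
    (hq : Fintype.card F = 2 ∨ Fintype.card F = 3)
    (σ : ℝ) (hσ : WeaklySidorenko F (Set.univ : Set F) σ) (t n : ℕ) :
    (exAff F n (Set.univ : Set (Fin t → F)) : ℝ) <
      (Fintype.card F : ℝ) ^ ((n : ℝ) - ((n : ℝ) - t) / (σ ^ t - t)) := by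
  classical
  set S : Set ℕ := {k : ℕ | ∃ A : Set (Fin n → F), A.ncard = k ∧
    ∀ f ∈ affHomSet F (Set.univ : Set (Fin t → F)) A,
      ¬ IsNondegen F (Set.univ : Set (Fin t → F)) f} with hS
  have h0 : 0 ∈ S := ⟨∅, Set.ncard_empty _,
    fun f hf _ => Set.notMem_empty _ (hf.2 ⟨0, trivial⟩)⟩
  have hbdd : BddAbove S := by
    refine ⟨(Set.univ : Set (Fin n → F)).ncard, ?_⟩
    rintro k ⟨A, rfl, -⟩
    exact Set.ncard_le_ncard (Set.subset_univ A) (Set.toFinite _)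
  have hmem : sSup S ∈ S := Nat.sSup_mem ⟨0, h0⟩ hbdd
  obtain ⟨A, hAcard, hAdeg⟩ := hmem
  have hex : exAff F n (Set.univ : Set (Fin t → F)) = sSup S := rfl
  rw [hex, ← hAcard]
  exact Stmt19.key_bound σ hσ t n A hAdeg
end
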